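/- arXiv:1609.02972 — 3 statements merged into one kernel-verified Lean document; each statement's English description precedes it below -/
import Mathlib

section
/- Let a₀, a₁, b₀, b₁ be real numbers and p₀, p₁, q₀, q₁ ∈ [1,∞] exponents satisfying a₀/p₁ − a₁/p₀ ≠ 0, b₀/q₁ − b₁/q₀ ≠ 0, and 1/p_k + 1/q_k ≥ 1 for k = 0, 1. Fix θ ∈ (0,1) and define 1/p_θ = (1−θ)/p₀ + θ/p₁, 1/q_θ = (1−θ)/q₀ + θ/q₁, a_θ = (1−θ)a₀ + θa₁, and b_θ = (1−θ)b₀ + θb₁. Then there exists a finite constant C, depending only on a₀, a₁, b₀, b₁, p₀, p₁, q₀, q₁, and θ, such that for all nonnegative constants A₀, A₁ and all sequences (f_i)_{i∈ℤ}, (g_j)_{j∈ℤ} of real numbers: Σ_{i,j∈ℤ} min{ A₀ 2^{a₀ i + b₀ j} |f_i|^{1/p₀} |g_j|^{1/q₀}, A₁ 2^{a₁ i + b₁ j} |f_i|^{1/p₁} |g_j|^{1/q₁} } ≤ C A₀^{1−θ} A₁^{θ} (Σ_{i∈ℤ} 2^{a_θ p_θ i} |f_i|)^{1/p_θ} (Σ_{j∈ℤ}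 2^{b_θ q_θ j} |g_j|)^{1/q_θ}. -/
open MeasureTheory Set
open scoped ENNReal NNReal

open scoped ENNReal NNReal

-- geometric over ℤ
lemma S10_tsum_int_abs (r : ℝ≥0∞) :
    ∑' j : ℤ, r ^ j.natAbs ≤ 2 * (1 - r)⁻¹ := by
  have h1 : HasSum (fun n : ℕ => r ^ n) ((1 - r)⁻¹) := by
    rw [← ENNReal.tsum_geometric]; exact ENNReal.summable.hasSum
  have h2 : HasSum (fun n : ℕ => r ^ (n + 1)) (r * (1 - r)⁻¹) := by
    rw [← ENNReal.tsum_geometric_add_one]; exact ENNReal.summable.hasSum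
  have h3 : HasSum (fun j : ℤ => r ^ j.natAbs) ((1 - r)⁻¹ + r * (1 - r)⁻¹) := by
    have := h1.int_rec h2
    convert this using 2 with j
    cases j <;> rfl
  rw [h3.tsum_eq, two_mul]
  gcongr
  by_cases hr : r ≤ 1
  · calc r * (1 - r)⁻¹ ≤ 1 * (1 - r)⁻¹ := by gcongr
      _ = (1 - r)⁻¹ := one_mul _
  · have : (1 - r) = 0 := by
      simp [tsub_eq_zero_iff_le, le_of_lt (not_le.mp hr)]
    simp [this]

lemma S10_geo {γ : ℝ} (hγ : γ ≠ 0) {ε : ℝ} (hε : 0 < ε) :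
    ∃ K : ℝ≥0∞, K ≠ ∞ ∧ ∀ e : ℝ,
      ∑' j : ℤ, (2:ℝ≥0∞) ^ (-(ε * |γ * (j:ℝ) + e|)) ≤ K := by
  have hγ' : 0 < |γ| := abs_pos.mpr hγ
  have hc : 0 < ε * |γ| := mul_pos hε hγ'
  set r : ℝ≥0∞ := (2:ℝ≥0∞) ^ (-(ε * |γ|)) with hr
  have hrlt : r < 1 := by
    rw [hr]
    apply ENNReal.rpow_lt_one_of_one_lt_of_neg (by norm_num) (by linarith)
  have hKfin : (2:ℝ≥0∞) ^ (ε * |γ|) * (2 * (1 - r)⁻¹) ≠ ∞ := by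
    apply ENNReal.mul_ne_top
    · exact ENNReal.rpow_ne_top_of_nonneg (le_of_lt hc) (by norm_num)
    · apply ENNReal.mul_ne_top (by norm_num)
      simp only [ne_eq, ENNReal.inv_eq_top, tsub_eq_zero_iff_le]
      exact not_le.mpr hrlt
  refine ⟨_, hKfin, fun e => ?_⟩
  set n : ℤ := ⌊-e / γ⌋ with hn
  have key : ∀ j : ℤ, (2:ℝ≥0∞) ^ (-(ε * |γ * (j:ℝ) + e|))
      ≤ (2:ℝ≥0∞) ^ (ε * |γ|) * r ^ (j - n).natAbs := by
    intro j
    have h1 : |γ| * (|((j:ℝ)) - (n:ℝ)| - 1) ≤ |γ * (j:ℝ) + e| := by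
      have he1 : (n:ℝ) ≤ -e / γ := Int.floor_le _
      have he2 : -e / γ < (n:ℝ) + 1 := Int.lt_floor_add_one _
      have habs : |(-e / γ) - (n:ℝ)| ≤ 1 := by
        rw [abs_le]; constructor <;> linarith
      have : |γ * (j:ℝ) + e| = |γ| * |(j:ℝ) + e / γ| := by
        rw [← abs_mul]; congr 1; field_simp
      rw [this]
      have : |(j:ℝ) - (n:ℝ)| - 1 ≤ |(j:ℝ) + e / γ| := by
        have := abs_sub_abs_le_abs_sub ((j:ℝ) - (n:ℝ)) (-(e/γ) - (n:ℝ))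
        have h3 : |(j:ℝ) - (n:ℝ) - (-(e/γ) - (n:ℝ))| = |(j:ℝ) + e/γ| := by
          congr 1; ring
        have h4 : |(-(e / γ)) - (n:ℝ)| ≤ 1 := by
          convert habs using 2; ring
        rw [h3] at this
        linarith
      calc |γ| * (|((j:ℝ)) - (n:ℝ)| - 1) ≤ |γ| * |(j:ℝ) + e / γ| := by
            apply mul_le_mul_of_nonneg_left this (le_of_lt hγ')
        _ = _ := rfl
    have h2 : -(ε * |γ * (j:ℝ) + e|) ≤ ε * |γ| + (-(ε * |γ|)) * ((j - n).natAbs : ℝ) := by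
      have hcast : (((j - n).natAbs : ℝ)) = |(j:ℝ) - (n:ℝ)| := by
        rw [Nat.cast_natAbs]
        push_cast
        ring
      rw [hcast]
      nlinarith [h1, hε.le, mul_le_mul_of_nonneg_left h1 hε.le]
    calc (2:ℝ≥0∞) ^ (-(ε * |γ * (j:ℝ) + e|))
        ≤ (2:ℝ≥0∞) ^ (ε * |γ| + (-(ε * |γ|)) * ((j - n).natAbs : ℝ)) :=
          ENNReal.rpow_le_rpow_of_exponent_le (by norm_num) h2
      _ = (2:ℝ≥0∞) ^ (ε * |γ|) * ((2:ℝ≥0∞) ^ (-(ε * |γ|))) ^ (((j - n).natAbs : ℝ)) := by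
          rw [ENNReal.rpow_add _ _ (by norm_num) (by norm_num),
            ENNReal.rpow_mul 2 (-(ε * |γ|))]
      _ = (2:ℝ≥0∞) ^ (ε * |γ|) * r ^ (j - n).natAbs := by
          rw [hr, ENNReal.rpow_natCast]
  calc ∑' j : ℤ, (2:ℝ≥0∞) ^ (-(ε * |γ * (j:ℝ) + e|))
      ≤ ∑' j : ℤ, (2:ℝ≥0∞) ^ (ε * |γ|) * r ^ (j - n).natAbs := ENNReal.tsum_le_tsum key
    _ = (2:ℝ≥0∞) ^ (ε * |γ|) * ∑' j : ℤ, r ^ (j - n).natAbs := ENNReal.tsum_mul_left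
    _ = (2:ℝ≥0∞) ^ (ε * |γ|) * ∑' j : ℤ, r ^ j.natAbs := by
        congr 1
        exact ((Equiv.subRight n).tsum_eq (fun j : ℤ => r ^ j.natAbs))
    _ ≤ (2:ℝ≥0∞) ^ (ε * |γ|) * (2 * (1 - r)⁻¹) := by
        gcongr
        exact S10_tsum_int_abs r

lemma S10_layerF {γ δ : ℝ} (hδ : δ ≠ 0) {ε : ℝ} (hε : 0 < ε) :
    ∃ K : ℝ≥0∞, K ≠ ∞ ∧ ∀ (e : ℝ) (F : ℤ → ℝ≥0∞),
      ∑' (i : ℤ) (j : ℤ), F i * (2:ℝ≥0∞) ^ (-(ε * |γ * (i:ℝ) + δ * (j:ℝ) + e|))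
        ≤ K * ∑' i, F i := by
  obtain ⟨K, hKfin, hK⟩ := S10_geo hδ hε
  refine ⟨K, hKfin, fun e F => ?_⟩
  calc ∑' (i : ℤ) (j : ℤ), F i * (2:ℝ≥0∞) ^ (-(ε * |γ * (i:ℝ) + δ * (j:ℝ) + e|))
      = ∑' (i : ℤ), F i * ∑' (j : ℤ), (2:ℝ≥0∞) ^ (-(ε * |δ * (j:ℝ) + (γ * (i:ℝ) + e)|)) := by
        refine tsum_congr fun i => ?_
        rw [ENNReal.tsum_mul_left]
        congr 1
        refine tsum_congr fun j => ?_
        congr 2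
        ring_nf
    _ ≤ ∑' (i : ℤ), F i * K := by gcongr with i; exact hK _
    _ = K * ∑' i, F i := by rw [ENNReal.tsum_mul_right, mul_comm]

lemma S10_layerG {γ δ : ℝ} (hγ : γ ≠ 0) {ε : ℝ} (hε : 0 < ε) :
    ∃ K : ℝ≥0∞, K ≠ ∞ ∧ ∀ (e : ℝ) (G : ℤ → ℝ≥0∞),
      ∑' (i : ℤ) (j : ℤ), G j * (2:ℝ≥0∞) ^ (-(ε * |γ * (i:ℝ) + δ * (j:ℝ) + e|))
        ≤ K * ∑' j, G j := by
  obtain ⟨K, hKfin, hK⟩ := S10_geo hγ hε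
  refine ⟨K, hKfin, fun e G => ?_⟩
  calc ∑' (i : ℤ) (j : ℤ), G j * (2:ℝ≥0∞) ^ (-(ε * |γ * (i:ℝ) + δ * (j:ℝ) + e|))
      = ∑' (j : ℤ) (i : ℤ), G j * (2:ℝ≥0∞) ^ (-(ε * |γ * (i:ℝ) + δ * (j:ℝ) + e|)) :=
        ENNReal.tsum_comm
    _ = ∑' (j : ℤ), G j * ∑' (i : ℤ), (2:ℝ≥0∞) ^ (-(ε * |γ * (i:ℝ) + (δ * (j:ℝ) + e)|)) := by
        refine tsum_congr fun j => ?_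
        rw [ENNReal.tsum_mul_left]
        congr 1
        refine tsum_congr fun i => ?_
        congr 2
        ring_nf
    _ ≤ ∑' (j : ℤ), G j * K := by gcongr with j; exact hK _
    _ = K * ∑' j, G j := by rw [ENNReal.tsum_mul_right, mul_comm]

lemma S10_holder {α : ℝ} (hα : 0 < α) (hα1 : α < 1) (f g : ℤ × ℤ → ℝ≥0∞) :
    ∑' p : ℤ × ℤ, (f p) ^ α * (g p) ^ (1 - α)
      ≤ (∑' p : ℤ × ℤ, f p) ^ α * (∑' p : ℤ × ℤ, g p) ^ (1 - α) := by
  have hconj : (1/α).HolderConjugate (1/(1-α)) := by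
    rw [Real.holderConjugate_iff]
    constructor
    · rw [lt_div_iff₀ hα]; linarith
    · rw [one_div, inv_inv, one_div, inv_inv]; ring
  have hmeas : ∀ h : ℤ × ℤ → ℝ≥0∞, AEMeasurable h (MeasureTheory.Measure.count) :=
    fun h => (measurable_of_countable h).aemeasurable
  have := ENNReal.lintegral_mul_le_Lp_mul_Lq (MeasureTheory.Measure.count) hconj
    (hmeas (fun p => f p ^ α)) (hmeas (fun p => g p ^ (1-α)))
  simp only [Pi.mul_apply] at this
  rw [MeasureTheory.lintegral_count] at this
  rw [MeasureTheory.lintegral_count, MeasureTheory.lintegral_count] at this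
  calc ∑' p : ℤ × ℤ, (f p) ^ α * (g p) ^ (1 - α) ≤
      (∑' p : ℤ × ℤ, (f p ^ α) ^ (1/α)) ^ (1/(1/α)) *
      (∑' p : ℤ × ℤ, (g p ^ (1-α)) ^ (1/(1-α))) ^ (1/(1/(1-α))) := this
    _ = (∑' p : ℤ × ℤ, f p) ^ α * (∑' p : ℤ × ℤ, g p) ^ (1 - α) := by
        rw [one_div_one_div, one_div_one_div]
        congr 2
        · refine tsum_congr fun p => ?_
          rw [← ENNReal.rpow_mul, mul_one_div, div_self (ne_of_gt hα), ENNReal.rpow_one]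
        · refine tsum_congr fun p => ?_
          rw [← ENNReal.rpow_mul, mul_one_div, div_self (by linarith), ENNReal.rpow_one]

lemma S10_rpow_le_max (x : ℝ≥0∞) {t : ℝ} (h0 : 0 ≤ t) (h1 : t ≤ 1) : x ^ t ≤ max x 1 := by
  rcases le_total x 1 with hx | hx
  · exact le_max_of_le_right (ENNReal.rpow_le_one hx h0)
  · refine le_max_of_le_left ?_
    calc x ^ t ≤ x ^ (1:ℝ) := ENNReal.rpow_le_rpow_of_exponent_le hx h1
      _ = x := ENNReal.rpow_one x

lemma S10_claimA {γ δ : ℝ} (hγ : γ ≠ 0) (hδ : δ ≠ 0) {ε α β : ℝ} (hε : 0 < ε)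
    (hα0 : 0 < α) (hα1 : α ≤ 1) (hβ0 : 0 < β) (hsum : 1 ≤ α + β) :
    ∃ K : ℝ≥0∞, K ≠ ∞ ∧ ∀ (e : ℝ) (F G : ℤ → ℝ≥0∞), (∑' i, F i) ≤ 1 → (∑' j, G j) ≤ 1 →
      ∑' (i : ℤ) (j : ℤ), F i ^ α * G j ^ β *
          (2:ℝ≥0∞) ^ (-(ε * |γ * (i:ℝ) + δ * (j:ℝ) + e|)) ≤ K := by
  obtain ⟨KF, hKFfin, hKF⟩ := S10_layerF (γ := γ) hδ hε
  obtain ⟨KG, hKGfin, hKG⟩ := S10_layerG (δ := δ) hγ hε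
  refine ⟨max KF 1 * max KG 1, ENNReal.mul_ne_top
    (by simp [hKFfin]) (by simp [hKGfin]), fun e F G hF hG => ?_⟩
  have hGle : ∀ j, G j ≤ 1 := fun j => le_trans (ENNReal.le_tsum j) hG
  have step1 : ∑' (i : ℤ) (j : ℤ), F i ^ α * G j ^ β *
      (2:ℝ≥0∞) ^ (-(ε * |γ * (i:ℝ) + δ * (j:ℝ) + e|))
      ≤ ∑' (i : ℤ) (j : ℤ), F i ^ α * G j ^ (1 - α) *
      (2:ℝ≥0∞) ^ (-(ε * |γ * (i:ℝ) + δ * (j:ℝ) + e|)) := by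
    refine ENNReal.tsum_le_tsum fun i => ENNReal.tsum_le_tsum fun j => ?_
    exact mul_le_mul_left (mul_le_mul_right
      (ENNReal.rpow_le_rpow_of_exponent_ge (hGle j) (by linarith)) _) _
  refine le_trans step1 ?_
  rcases eq_or_lt_of_le hα1 with rfl | hαlt
  · -- α = 1
    have : ∑' (i : ℤ) (j : ℤ), F i ^ (1:ℝ) * G j ^ (1 - (1:ℝ)) *
        (2:ℝ≥0∞) ^ (-(ε * |γ * (i:ℝ) + δ * (j:ℝ) + e|))
        = ∑' (i : ℤ) (j : ℤ), F i *
        (2:ℝ≥0∞) ^ (-(ε * |γ * (i:ℝ) + δ * (j:ℝ) + e|)) := by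
      refine tsum_congr fun i => tsum_congr fun j => ?_
      norm_num
    rw [this]
    calc _ ≤ KF * ∑' i, F i := hKF e F
      _ ≤ KF * 1 := by gcongr
      _ ≤ max KF 1 * max KG 1 := by
          rw [mul_one]
          exact le_trans (le_max_left _ _) (le_mul_of_one_le_right zero_le (le_max_right _ _))
  · -- α < 1
    set t : ℤ × ℤ → ℝ := fun p => -(ε * |γ * (p.1:ℝ) + δ * (p.2:ℝ) + e|) with ht
    have key : ∑' (i : ℤ) (j : ℤ), F i ^ α * G j ^ (1 - α) *
        (2:ℝ≥0∞) ^ (-(ε * |γ * (i:ℝ) + δ * (j:ℝ) + e|))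
        = ∑' p : ℤ × ℤ, (F p.1 * (2:ℝ≥0∞) ^ t p) ^ α * (G p.2 * (2:ℝ≥0∞) ^ t p) ^ (1 - α) := by
      rw [ENNReal.tsum_prod']
      refine tsum_congr fun i => tsum_congr fun j => ?_
      rw [ENNReal.mul_rpow_of_nonneg _ _ (le_of_lt hα0),
        ENNReal.mul_rpow_of_nonneg _ _ (by linarith : (0:ℝ) ≤ 1 - α)]
      have h2 : ((2:ℝ≥0∞) ^ t (i, j)) ^ α * ((2:ℝ≥0∞) ^ t (i, j)) ^ (1 - α)
          = (2:ℝ≥0∞) ^ t (i, j) := by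
        rw [← ENNReal.rpow_mul, ← ENNReal.rpow_mul,
          ← ENNReal.rpow_add _ _ (by norm_num) (by norm_num)]
        ring_nf
      calc F i ^ α * G j ^ (1 - α) * (2:ℝ≥0∞) ^ t (i, j)
          = F i ^ α * G j ^ (1 - α) *
            (((2:ℝ≥0∞) ^ t (i, j)) ^ α * ((2:ℝ≥0∞) ^ t (i, j)) ^ (1 - α)) := by rw [h2]
        _ = F i ^ α * ((2:ℝ≥0∞) ^ t (i, j)) ^ α *
            (G j ^ (1 - α) * ((2:ℝ≥0∞) ^ t (i, j)) ^ (1 - α)) := by ring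
    rw [key]
    calc ∑' p : ℤ × ℤ, (F p.1 * (2:ℝ≥0∞) ^ t p) ^ α * (G p.2 * (2:ℝ≥0∞) ^ t p) ^ (1 - α)
        ≤ (∑' p : ℤ × ℤ, F p.1 * (2:ℝ≥0∞) ^ t p) ^ α *
          (∑' p : ℤ × ℤ, G p.2 * (2:ℝ≥0∞) ^ t p) ^ (1 - α) :=
          S10_holder hα0 hαlt _ _
      _ ≤ KF ^ α * KG ^ (1 - α) := by
          have hA : (∑' p : ℤ × ℤ, F p.1 * (2:ℝ≥0∞) ^ t p) ≤ KF := by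
            rw [ENNReal.tsum_prod']
            refine le_trans (hKF e F) ?_
            calc KF * ∑' i, F i ≤ KF * 1 := by gcongr
              _ = KF := mul_one KF
          have hB : (∑' p : ℤ × ℤ, G p.2 * (2:ℝ≥0∞) ^ t p) ≤ KG := by
            rw [ENNReal.tsum_prod']
            refine le_trans (hKG e G) ?_
            calc KG * ∑' j, G j ≤ KG * 1 := by gcongr
              _ = KG := mul_one KG
          exact mul_le_mul' (ENNReal.rpow_le_rpow hA hα0.le)
            (ENNReal.rpow_le_rpow hB (by linarith))
      _ ≤ max KF 1 * max KG 1 :=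
          mul_le_mul' (S10_rpow_le_max KF (le_of_lt hα0) hα1)
            (S10_rpow_le_max KG (by linarith) (by linarith))

lemma S10_prod_pow (F G : ℝ≥0∞) (a b c : ℝ) {s : ℝ} (hs : 0 ≤ s) :
    ((2:ℝ≥0∞) ^ a * F ^ b * G ^ c) ^ s
      = (2:ℝ≥0∞) ^ (a * s) * F ^ (b * s) * G ^ (c * s) := by
  rw [ENNReal.mul_rpow_of_nonneg _ _ hs, ENNReal.mul_rpow_of_nonneg _ _ hs,
    ENNReal.rpow_mul, ENNReal.rpow_mul, ENNReal.rpow_mul]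

lemma S10_prod_mul (F G : ℝ≥0∞) (a1 a2 b1 b2 c1 c2 : ℝ)
    (hb1 : 0 ≤ b1) (hb2 : 0 ≤ b2) (hc1 : 0 ≤ c1) (hc2 : 0 ≤ c2) :
    ((2:ℝ≥0∞) ^ a1 * F ^ b1 * G ^ c1) * ((2:ℝ≥0∞) ^ a2 * F ^ b2 * G ^ c2)
      = (2:ℝ≥0∞) ^ (a1 + a2) * F ^ (b1 + b2) * G ^ (c1 + c2) := by
  rw [ENNReal.rpow_add _ _ (by norm_num : (2:ℝ≥0∞) ≠ 0) (by norm_num),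
    ENNReal.rpow_add_of_nonneg (x := F) _ _ hb1 hb2,
    ENNReal.rpow_add_of_nonneg (x := G) _ _ hc1 hc2]
  ring

lemma S10_pointwise {θ σ : ℝ} (hθ : 0 < θ) (hσ0 : 0 ≤ σ) (hσ1 : σ ≤ 1)
    {α₀ α₁ β₀ β₁ : ℝ} (h00 : 0 ≤ α₀) (h01 : 0 ≤ α₁) (h10 : 0 ≤ β₀) (h11 : 0 ≤ β₁)
    (w : ℝ) (F G : ℝ≥0∞) :
    min ((2:ℝ≥0∞) ^ w * F ^ α₀ * G ^ β₀)
        ((2:ℝ≥0∞) ^ (-((1 - θ)/θ * w)) * F ^ α₁ * G ^ β₁)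
      ≤ (2:ℝ≥0∞) ^ ((1 - σ/θ) * w) * F ^ ((1-σ)*α₀ + σ*α₁) * G ^ ((1-σ)*β₀ + σ*β₁) := by
  set X₀ := (2:ℝ≥0∞) ^ w * F ^ α₀ * G ^ β₀ with hX₀
  set X₁ := (2:ℝ≥0∞) ^ (-((1 - θ)/θ * w)) * F ^ α₁ * G ^ β₁ with hX₁
  have hmin : min X₀ X₁ ≤ X₀ ^ (1 - σ) * X₁ ^ σ := by
    calc min X₀ X₁ = (min X₀ X₁) ^ ((1 - σ) + σ) := by rw [sub_add_cancel, ENNReal.rpow_one]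
      _ = (min X₀ X₁) ^ (1 - σ) * (min X₀ X₁) ^ σ :=
          ENNReal.rpow_add_of_nonneg _ _ (by linarith) hσ0
      _ ≤ X₀ ^ (1 - σ) * X₁ ^ σ :=
          mul_le_mul' (ENNReal.rpow_le_rpow (min_le_left _ _) (by linarith))
            (ENNReal.rpow_le_rpow (min_le_right _ _) hσ0)
  refine le_trans hmin (le_of_eq ?_)
  rw [hX₀, hX₁, S10_prod_pow F G _ _ _ (by linarith : (0:ℝ) ≤ 1 - σ),
    S10_prod_pow F G _ _ _ hσ0,
    S10_prod_mul F G _ _ _ _ _ _ (mul_nonneg h00 (by linarith)) (mul_nonneg h01 hσ0)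
      (mul_nonneg h10 (by linarith)) (mul_nonneg h11 hσ0)]
  have e1 : w * (1 - σ) + -((1 - θ)/θ * w) * σ = (1 - σ/θ) * w := by
    field_simp; ring
  have e2 : α₀ * (1 - σ) + α₁ * σ = (1-σ)*α₀ + σ*α₁ := by ring
  have e3 : β₀ * (1 - σ) + β₁ * σ = (1-σ)*β₀ + σ*β₁ := by ring
  rw [e1, e2, e3]

set_option maxHeartbeats 2000000 in
lemma S10_core {γ δ : ℝ} (hγ : γ ≠ 0) (hδ : δ ≠ 0) {α₀ α₁ β₀ β₁ : ℝ}
    (ha00 : 0 ≤ α₀) (ha01 : α₀ ≤ 1) (ha10 : 0 ≤ α₁) (ha11 : α₁ ≤ 1)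
    (hb00 : 0 ≤ β₀) (hb01 : β₀ ≤ 1) (hb10 : 0 ≤ β₁) (hb11 : β₁ ≤ 1)
    (hm0 : 1 ≤ α₀ + β₀) (hm1 : 1 ≤ α₁ + β₁) {θ : ℝ} (hθ0 : 0 < θ) (hθ1 : θ < 1)
    (hP : 0 < (1-θ)*α₀ + θ*α₁) (hQ : 0 < (1-θ)*β₀ + θ*β₁) :
    ∃ K : ℝ≥0∞, K ≠ ∞ ∧ ∀ (e : ℝ) (F G : ℤ → ℝ≥0∞), (∑' i, F i) ≤ 1 → (∑' j, G j) ≤ 1 →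
      ∑' (i : ℤ) (j : ℤ),
        min ((2:ℝ≥0∞) ^ (γ*(i:ℝ) + δ*(j:ℝ) + e) * F i ^ α₀ * G j ^ β₀)
          ((2:ℝ≥0∞) ^ (-((1 - θ)/θ * (γ*(i:ℝ) + δ*(j:ℝ) + e))) * F i ^ α₁ * G j ^ β₁)
        ≤ K := by
  obtain ⟨η, hη0, hηθ, hη1θ, habsa, habsb⟩ : ∃ η : ℝ, 0 < η ∧ η ≤ θ/2 ∧ η ≤ (1-θ)/2 ∧
      |η * (α₁-α₀)| ≤ ((1-θ)*α₀ + θ*α₁)/2 ∧ |η * (β₁-β₀)| ≤ ((1-θ)*β₀ + θ*β₁)/2 := by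
    set P := (1-θ)*α₀ + θ*α₁
    set Q := (1-θ)*β₀ + θ*β₁
    have hpa : (0:ℝ) < 1+|α₁-α₀| := by positivity
    have hpb : (0:ℝ) < 1+|β₁-β₀| := by positivity
    refine ⟨min (min (θ/2) ((1-θ)/2)) (min (P/(2*(1+|α₁-α₀|))) (Q/(2*(1+|β₁-β₀|)))),
      lt_min (lt_min (by linarith) (by linarith))
        (lt_min (div_pos hP (by positivity)) (div_pos hQ (by positivity))),
      le_trans (min_le_left _ _) (min_le_left _ _),
      le_trans (min_le_left _ _) (min_le_right _ _), ?_, ?_⟩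
    · have h1 : min (min (θ/2) ((1-θ)/2)) (min (P/(2*(1+|α₁-α₀|))) (Q/(2*(1+|β₁-β₀|))))
          ≤ P/(2*(1+|α₁-α₀|)) := le_trans (min_le_right _ _) (min_le_left _ _)
      have h0 : 0 < min (min (θ/2) ((1-θ)/2)) (min (P/(2*(1+|α₁-α₀|))) (Q/(2*(1+|β₁-β₀|)))) :=
        lt_min (lt_min (by linarith) (by linarith))
          (lt_min (div_pos hP (by positivity)) (div_pos hQ (by positivity)))
      rw [abs_mul, abs_of_pos h0]
      calc _ ≤ (P/(2*(1+|α₁-α₀|))) * |α₁-α₀| :=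
            mul_le_mul_of_nonneg_right h1 (abs_nonneg _)
        _ ≤ P/2 := by
            rw [div_mul_eq_mul_div, div_le_div_iff₀ (by positivity) (by norm_num)]
            nlinarith [abs_nonneg (α₁-α₀), hP]
    · have h1 : min (min (θ/2) ((1-θ)/2)) (min (P/(2*(1+|α₁-α₀|))) (Q/(2*(1+|β₁-β₀|))))
          ≤ Q/(2*(1+|β₁-β₀|)) := le_trans (min_le_right _ _) (min_le_right _ _)
      have h0 : 0 < min (min (θ/2) ((1-θ)/2)) (min (P/(2*(1+|α₁-α₀|))) (Q/(2*(1+|β₁-β₀|)))) :=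
        lt_min (lt_min (by linarith) (by linarith))
          (lt_min (div_pos hP (by positivity)) (div_pos hQ (by positivity)))
      rw [abs_mul, abs_of_pos h0]
      calc _ ≤ (Q/(2*(1+|β₁-β₀|))) * |β₁-β₀| :=
            mul_le_mul_of_nonneg_right h1 (abs_nonneg _)
        _ ≤ Q/2 := by
            rw [div_mul_eq_mul_div, div_le_div_iff₀ (by positivity) (by norm_num)]
            nlinarith [abs_nonneg (β₁-β₀), hQ]
  have habsa' := abs_le.mp habsa
  have habsb' := abs_le.mp habsb
  have hσp0 : (0:ℝ) ≤ θ + η := by linarith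
  have hσp1 : θ + η ≤ 1 := by linarith
  have hσm0 : (0:ℝ) ≤ θ - η := by linarith
  have hσm1 : θ - η ≤ 1 := by linarith
  have hαp0 : 0 < (1-(θ+η))*α₀ + (θ+η)*α₁ := by nlinarith [habsa'.1]
  have hαm0 : 0 < (1-(θ-η))*α₀ + (θ-η)*α₁ := by nlinarith [habsa'.2]
  have hβp0 : 0 < (1-(θ+η))*β₀ + (θ+η)*β₁ := by nlinarith [habsb'.1]
  have hβm0 : 0 < (1-(θ-η))*β₀ + (θ-η)*β₁ := by nlinarith [habsb'.2]
  have hαp1 : (1-(θ+η))*α₀ + (θ+η)*α₁ ≤ 1 := by nlinarith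
  have hαm1 : (1-(θ-η))*α₀ + (θ-η)*α₁ ≤ 1 := by nlinarith
  have hmp : 1 ≤ ((1-(θ+η))*α₀ + (θ+η)*α₁) + ((1-(θ+η))*β₀ + (θ+η)*β₁) := by nlinarith
  have hmm : 1 ≤ ((1-(θ-η))*α₀ + (θ-η)*α₁) + ((1-(θ-η))*β₀ + (θ-η)*β₁) := by nlinarith
  have hε0 : 0 < η/θ := by positivity
  obtain ⟨Kp, hKpfin, hKp⟩ := S10_claimA hγ hδ hε0 hαp0 hαp1 hβp0 hmp
  obtain ⟨Km, hKmfin, hKm⟩ := S10_claimA hγ hδ hε0 hαm0 hαm1 hβm0 hmm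
  refine ⟨Kp + Km, ENNReal.add_ne_top.mpr ⟨hKpfin, hKmfin⟩, fun e F G hF hG => ?_⟩
  have hpoint : ∀ (i j : ℤ),
      min ((2:ℝ≥0∞) ^ (γ*(i:ℝ) + δ*(j:ℝ) + e) * F i ^ α₀ * G j ^ β₀)
        ((2:ℝ≥0∞) ^ (-((1 - θ)/θ * (γ*(i:ℝ) + δ*(j:ℝ) + e))) * F i ^ α₁ * G j ^ β₁)
      ≤ F i ^ ((1-(θ+η))*α₀ + (θ+η)*α₁) * G j ^ ((1-(θ+η))*β₀ + (θ+η)*β₁) *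
          (2:ℝ≥0∞) ^ (-(η/θ * |γ*(i:ℝ) + δ*(j:ℝ) + e|))
        + F i ^ ((1-(θ-η))*α₀ + (θ-η)*α₁) * G j ^ ((1-(θ-η))*β₀ + (θ-η)*β₁) *
          (2:ℝ≥0∞) ^ (-(η/θ * |γ*(i:ℝ) + δ*(j:ℝ) + e|)) := by
    intro i j
    rcases le_or_gt 0 (γ*(i:ℝ) + δ*(j:ℝ) + e) with hw0 | hw0
    · refine le_trans (S10_pointwise hθ0 hσp0 hσp1 ha00 ha10 hb00 hb10
        (γ*(i:ℝ) + δ*(j:ℝ) + e) (F i) (G j)) (le_trans (le_of_eq ?_) (le_add_right le_rfl))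
      have h2 : (1 - (θ+η)/θ) * (γ*(i:ℝ) + δ*(j:ℝ) + e)
          = -(η/θ * |γ*(i:ℝ) + δ*(j:ℝ) + e|) := by
        rw [abs_of_nonneg hw0]
        field_simp <;> ring
      rw [h2]
      ring
    · refine le_trans (S10_pointwise hθ0 hσm0 hσm1 ha00 ha10 hb00 hb10
        (γ*(i:ℝ) + δ*(j:ℝ) + e) (F i) (G j)) (le_trans (le_of_eq ?_) (le_add_left le_rfl))
      have h2 : (1 - (θ-η)/θ) * (γ*(i:ℝ) + δ*(j:ℝ) + e)
          = -(η/θ * |γ*(i:ℝ) + δ*(j:ℝ) + e|) := by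
        rw [abs_of_neg hw0]
        field_simp <;> ring
      rw [h2]
      ring
  calc ∑' (i : ℤ) (j : ℤ),
        min ((2:ℝ≥0∞) ^ (γ*(i:ℝ) + δ*(j:ℝ) + e) * F i ^ α₀ * G j ^ β₀)
          ((2:ℝ≥0∞) ^ (-((1 - θ)/θ * (γ*(i:ℝ) + δ*(j:ℝ) + e))) * F i ^ α₁ * G j ^ β₁)
      ≤ ∑' (i : ℤ) (j : ℤ),
          (F i ^ ((1-(θ+η))*α₀ + (θ+η)*α₁) * G j ^ ((1-(θ+η))*β₀ + (θ+η)*β₁) *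
            (2:ℝ≥0∞) ^ (-(η/θ * |γ*(i:ℝ) + δ*(j:ℝ) + e|))
          + F i ^ ((1-(θ-η))*α₀ + (θ-η)*α₁) * G j ^ ((1-(θ-η))*β₀ + (θ-η)*β₁) *
            (2:ℝ≥0∞) ^ (-(η/θ * |γ*(i:ℝ) + δ*(j:ℝ) + e|))) :=
        ENNReal.tsum_le_tsum fun i => ENNReal.tsum_le_tsum fun j => hpoint i j
    _ = (∑' (i : ℤ) (j : ℤ), F i ^ ((1-(θ+η))*α₀ + (θ+η)*α₁) *
            G j ^ ((1-(θ+η))*β₀ + (θ+η)*β₁) *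
            (2:ℝ≥0∞) ^ (-(η/θ * |γ*(i:ℝ) + δ*(j:ℝ) + e|)))
        + ∑' (i : ℤ) (j : ℤ), F i ^ ((1-(θ-η))*α₀ + (θ-η)*α₁) *
            G j ^ ((1-(θ-η))*β₀ + (θ-η)*β₁) *
            (2:ℝ≥0∞) ^ (-(η/θ * |γ*(i:ℝ) + δ*(j:ℝ) + e|)) := by
        rw [← ENNReal.tsum_add]
        exact tsum_congr fun i => by rw [← ENNReal.tsum_add]
    _ ≤ Kp + Km := add_le_add (hKp e F G hF hG) (hKm e F G hF hG)

lemma S10_logid {A M tT sS : ℝ} (hA : 0 < A) (hM : 0 < M) (hT : 0 < tT) (hS : 0 < sS)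
    (α β aa bb cc dd ii jj ee : ℝ)
    (hee : ee * Real.log 2 = Real.log A + α * Real.log tT + β * Real.log sS - Real.log M) :
    A * (2:ℝ) ^ (aa * ii + bb * jj)
      = M * (2:ℝ) ^ ((aa - cc*α) * ii + (bb - dd*β) * jj + ee)
        * ((2:ℝ) ^ (cc * ii) / tT) ^ α * ((2:ℝ) ^ (dd * jj) / sS) ^ β := by
  have h2 : (0:ℝ) < 2 := two_pos
  apply Real.log_injOn_pos (Set.mem_Ioi.2 (by positivity)) (Set.mem_Ioi.2 (by positivity))
  rw [Real.log_mul (by positivity) (by positivity),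
    Real.log_mul (by positivity) (by positivity),
    Real.log_mul (by positivity) (by positivity),
    Real.log_mul (by positivity) (by positivity),
    Real.log_rpow h2, Real.log_rpow h2,
    Real.log_rpow (by positivity), Real.log_rpow (by positivity),
    Real.log_div (by positivity) (by positivity),
    Real.log_div (by positivity) (by positivity),
    Real.log_rpow h2, Real.log_rpow h2]
  linear_combination -hee

lemma S10_argid {A M tT sS : ℝ} (hA : 0 < A) (hM : 0 < M) (hT : 0 < tT) (hS : 0 < sS)
    {α β : ℝ} (hα : 0 ≤ α) (hβ : 0 ≤ β) (aa bb cc dd ii jj ee : ℝ)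
    (hee : ee * Real.log 2 = Real.log A + α * Real.log tT + β * Real.log sS - Real.log M)
    (u v : ℝ) (hu : 0 ≤ u) (hv : 0 ≤ v) :
    A * (2:ℝ) ^ (aa * ii + bb * jj) * u ^ α * v ^ β
      = M * ((2:ℝ) ^ ((aa - cc*α) * ii + (bb - dd*β) * jj + ee)
        * ((2:ℝ) ^ (cc * ii) * u / tT) ^ α * ((2:ℝ) ^ (dd * jj) * v / sS) ^ β) := by
  have key := S10_logid hA hM hT hS α β aa bb cc dd ii jj ee hee
  have e1 : ((2:ℝ) ^ (cc * ii) * u / tT) ^ α = ((2:ℝ) ^ (cc * ii) / tT) ^ α * u ^ α := by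
    rw [← Real.mul_rpow (by positivity) hu]
    congr 1
    ring
  have e2 : ((2:ℝ) ^ (dd * jj) * v / sS) ^ β = ((2:ℝ) ^ (dd * jj) / sS) ^ β * v ^ β := by
    rw [← Real.mul_rpow (by positivity) hv]
    congr 1
    ring
  rw [e1, e2]
  linear_combination (u ^ α * v ^ β) * key

open MeasureTheory Set


set_option maxHeartbeats 3000000

/-- Marcinkiewicz-type interpolation lemma for double sums of minima
(Lemma on sublevel set estimates).  Here `p⁻¹.toReal` encodes `1/p` (with `1/∞ = 0`),
real `rpow` is used for all powers, and the sums take values in `ℝ≥0∞`. -/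
theorem statement10 (a₀ a₁ b₀ b₁ : ℝ) (p₀ p₁ q₀ q₁ : ℝ≥0∞)
    (hp₀ : 1 ≤ p₀) (hp₁ : 1 ≤ p₁) (hq₀ : 1 ≤ q₀) (hq₁ : 1 ≤ q₁)
    (hdet1 : a₀ * p₁⁻¹.toReal - a₁ * p₀⁻¹.toReal ≠ 0)
    (hdet2 : b₀ * q₁⁻¹.toReal - b₁ * q₀⁻¹.toReal ≠ 0)
    (hm0 : 1 ≤ p₀⁻¹.toReal + q₀⁻¹.toReal)
    (hm1 : 1 ≤ p₁⁻¹.toReal + q₁⁻¹.toReal)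
    (θ : ℝ) (hθ : θ ∈ Ioo (0 : ℝ) 1) :
    ∃ C : ℝ≥0, ∀ A₀ A₁ : ℝ, 0 ≤ A₀ → 0 ≤ A₁ → ∀ f g : ℤ → ℝ,
      (∑' (i : ℤ) (j : ℤ), ENNReal.ofReal (min
          (A₀ * (2 : ℝ) ^ (a₀ * (i : ℝ) + b₀ * (j : ℝ)) *
            |f i| ^ p₀⁻¹.toReal * |g j| ^ q₀⁻¹.toReal)
          (A₁ * (2 : ℝ) ^ (a₁ * (i : ℝ) + b₁ * (j : ℝ)) *
            |f i| ^ p₁⁻¹.toReal * |g j| ^ q₁⁻¹.toReal)))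
        ≤ C * ENNReal.ofReal (A₀ ^ (1 - θ) * A₁ ^ θ) *
          (∑' i : ℤ, ENNReal.ofReal
              ((2 : ℝ) ^ (((1 - θ) * a₀ + θ * a₁) *
                ((1 - θ) * p₀⁻¹.toReal + θ * p₁⁻¹.toReal)⁻¹ * (i : ℝ)) * |f i|)) ^
            ((1 - θ) * p₀⁻¹.toReal + θ * p₁⁻¹.toReal) *
          (∑' j : ℤ, ENNReal.ofReal
              ((2 : ℝ) ^ (((1 - θ) * b₀ + θ * b₁) *
                ((1 - θ) * q₀⁻¹.toReal + θ * q₁⁻¹.toReal)⁻¹ * (j : ℝ)) * |g j|)) ^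
            ((1 - θ) * q₀⁻¹.toReal + θ * q₁⁻¹.toReal) := by
  obtain ⟨hθ0, hθ1⟩ := hθ
  set α₀ := p₀⁻¹.toReal with hα₀def
  set α₁ := p₁⁻¹.toReal with hα₁def
  set β₀ := q₀⁻¹.toReal with hβ₀def
  set β₁ := q₁⁻¹.toReal with hβ₁def
  have hα₀0 : 0 ≤ α₀ := ENNReal.toReal_nonneg
  have hα₁0 : 0 ≤ α₁ := ENNReal.toReal_nonneg
  have hβ₀0 : 0 ≤ β₀ := ENNReal.toReal_nonneg
  have hβ₁0 : 0 ≤ β₁ := ENNReal.toReal_nonneg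
  have hα₀1 : α₀ ≤ 1 := by
    rw [hα₀def]
    calc p₀⁻¹.toReal ≤ (1:ℝ≥0∞).toReal :=
          ENNReal.toReal_mono ENNReal.one_ne_top (ENNReal.inv_le_one.mpr hp₀)
      _ = 1 := ENNReal.toReal_one
  have hα₁1 : α₁ ≤ 1 := by
    rw [hα₁def]
    calc p₁⁻¹.toReal ≤ (1:ℝ≥0∞).toReal :=
          ENNReal.toReal_mono ENNReal.one_ne_top (ENNReal.inv_le_one.mpr hp₁)
      _ = 1 := ENNReal.toReal_one
  have hβ₀1 : β₀ ≤ 1 := by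
    rw [hβ₀def]
    calc q₀⁻¹.toReal ≤ (1:ℝ≥0∞).toReal :=
          ENNReal.toReal_mono ENNReal.one_ne_top (ENNReal.inv_le_one.mpr hq₀)
      _ = 1 := ENNReal.toReal_one
  have hβ₁1 : β₁ ≤ 1 := by
    rw [hβ₁def]
    calc q₁⁻¹.toReal ≤ (1:ℝ≥0∞).toReal :=
          ENNReal.toReal_mono ENNReal.one_ne_top (ENNReal.inv_le_one.mpr hq₁)
      _ = 1 := ENNReal.toReal_one
  have hαor : α₀ ≠ 0 ∨ α₁ ≠ 0 := by
    by_contra hcon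
    push_neg at hcon
    exact hdet1 (by rw [hcon.1, hcon.2]; ring)
  have hβor : β₀ ≠ 0 ∨ β₁ ≠ 0 := by
    by_contra hcon
    push_neg at hcon
    exact hdet2 (by rw [hcon.1, hcon.2]; ring)
  set P := (1 - θ) * α₀ + θ * α₁ with hPdef
  set Q := (1 - θ) * β₀ + θ * β₁ with hQdef
  have hP : 0 < P := by
    rcases hαor with h | h
    · have h1 : 0 < α₀ := lt_of_le_of_ne hα₀0 (Ne.symm h)
      nlinarith
    · have h1 : 0 < α₁ := lt_of_le_of_ne hα₁0 (Ne.symm h)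
      nlinarith
  have hQ : 0 < Q := by
    rcases hβor with h | h
    · have h1 : 0 < β₀ := lt_of_le_of_ne hβ₀0 (Ne.symm h)
      nlinarith
    · have h1 : 0 < β₁ := lt_of_le_of_ne hβ₁0 (Ne.symm h)
      nlinarith
  set c := ((1 - θ) * a₀ + θ * a₁) * P⁻¹ with hcdef
  set d := ((1 - θ) * b₀ + θ * b₁) * Q⁻¹ with hddef
  have hcP : c * P = (1 - θ) * a₀ + θ * a₁ := by
    rw [hcdef]
    field_simp
  have hdQ : d * Q = (1 - θ) * b₀ + θ * b₁ := by
    rw [hddef]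
    field_simp
  have hγP : (a₀ - c * α₀) * P = θ * (a₀ * α₁ - a₁ * α₀) := by
    linear_combination a₀ * hPdef - α₀ * hcP
  have hδQ : (b₀ - d * β₀) * Q = θ * (b₀ * β₁ - b₁ * β₀) := by
    linear_combination b₀ * hQdef - β₀ * hdQ
  have hγ : a₀ - c * α₀ ≠ 0 := by
    intro h
    rw [h, zero_mul] at hγP
    rcases mul_eq_zero.mp hγP.symm with h' | h'
    · exact absurd h' (ne_of_gt hθ0)
    · exact hdet1 h'
  have hδ : b₀ - d * β₀ ≠ 0 := by
    intro h
    rw [h, zero_mul] at hδQ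
    rcases mul_eq_zero.mp hδQ.symm with h' | h'
    · exact absurd h' (ne_of_gt hθ0)
    · exact hdet2 h'
  have hrelγ : a₁ - c * α₁ = -((1 - θ)/θ * (a₀ - c * α₀)) := by
    apply mul_right_cancel₀ (ne_of_gt hP)
    have h1 : (a₁ - c * α₁) * P = (1 - θ) * (a₁ * α₀ - a₀ * α₁) := by
      linear_combination a₁ * hPdef - α₁ * hcP
    calc (a₁ - c * α₁) * P = (1 - θ) * (a₁ * α₀ - a₀ * α₁) := h1
      _ = -((1 - θ)/θ) * (θ * (a₀ * α₁ - a₁ * α₀)) := by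
          field_simp
          ring
      _ = -((1 - θ)/θ * (a₀ - c * α₀)) * P := by rw [← hγP]; ring
  have hrelδ : b₁ - d * β₁ = -((1 - θ)/θ * (b₀ - d * β₀)) := by
    apply mul_right_cancel₀ (ne_of_gt hQ)
    have h1 : (b₁ - d * β₁) * Q = (1 - θ) * (b₁ * β₀ - b₀ * β₁) := by
      linear_combination b₁ * hQdef - β₁ * hdQ
    calc (b₁ - d * β₁) * Q = (1 - θ) * (b₁ * β₀ - b₀ * β₁) := h1
      _ = -((1 - θ)/θ) * (θ * (b₀ * β₁ - b₁ * β₀)) := by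
          field_simp
          ring
      _ = -((1 - θ)/θ * (b₀ - d * β₀)) * Q := by rw [← hδQ]; ring
  obtain ⟨K, hKfin, hK⟩ := S10_core hγ hδ hα₀0 hα₀1 hα₁0 hα₁1 hβ₀0 hβ₀1 hβ₁0 hβ₁1
    hm0 hm1 hθ0 hθ1 hP hQ
  refine ⟨1 + K.toNNReal, fun A₀ A₁ hA₀ hA₁ f g => ?_⟩
  have hCcoe : ((1 + K.toNNReal : ℝ≥0) : ℝ≥0∞) = 1 + K := by
    rw [ENNReal.coe_add, ENNReal.coe_one, ENNReal.coe_toNNReal hKfin]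
  have hKC : K ≤ ((1 + K.toNNReal : ℝ≥0) : ℝ≥0∞) := by
    rw [hCcoe]; exact le_add_self
  have hC0 : ((1 + K.toNNReal : ℝ≥0) : ℝ≥0∞) ≠ 0 := by
    rw [hCcoe]; simp
  -- degenerate cases for A₀, A₁
  rcases eq_or_lt_of_le hA₀ with hA₀' | hA₀'
  · have hzero : ∀ i j : ℤ, ENNReal.ofReal (min
        (A₀ * (2:ℝ) ^ (a₀ * (i:ℝ) + b₀ * (j:ℝ)) * |f i| ^ α₀ * |g j| ^ β₀)
        (A₁ * (2:ℝ) ^ (a₁ * (i:ℝ) + b₁ * (j:ℝ)) * |f i| ^ α₁ * |g j| ^ β₁)) = 0 := by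
      intro i j
      refine le_antisymm ?_ zero_le
      calc ENNReal.ofReal _ ≤ ENNReal.ofReal 0 :=
            ENNReal.ofReal_le_ofReal (le_trans (min_le_left _ _)
              (le_of_eq (by rw [← hA₀']; ring)))
        _ = 0 := ENNReal.ofReal_zero
    calc ∑' (i : ℤ) (j : ℤ), ENNReal.ofReal (min
          (A₀ * (2:ℝ) ^ (a₀ * (i:ℝ) + b₀ * (j:ℝ)) * |f i| ^ α₀ * |g j| ^ β₀)
          (A₁ * (2:ℝ) ^ (a₁ * (i:ℝ) + b₁ * (j:ℝ)) * |f i| ^ α₁ * |g j| ^ β₁))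
        = 0 := by simp only [hzero, tsum_zero]
      _ ≤ _ := zero_le
  rcases eq_or_lt_of_le hA₁ with hA₁' | hA₁'
  · have hzero : ∀ i j : ℤ, ENNReal.ofReal (min
        (A₀ * (2:ℝ) ^ (a₀ * (i:ℝ) + b₀ * (j:ℝ)) * |f i| ^ α₀ * |g j| ^ β₀)
        (A₁ * (2:ℝ) ^ (a₁ * (i:ℝ) + b₁ * (j:ℝ)) * |f i| ^ α₁ * |g j| ^ β₁)) = 0 := by
      intro i j
      refine le_antisymm ?_ zero_le
      calc ENNReal.ofReal _ ≤ ENNReal.ofReal 0 :=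
            ENNReal.ofReal_le_ofReal (le_trans (min_le_right _ _)
              (le_of_eq (by rw [← hA₁']; ring)))
        _ = 0 := ENNReal.ofReal_zero
    calc ∑' (i : ℤ) (j : ℤ), ENNReal.ofReal (min
          (A₀ * (2:ℝ) ^ (a₀ * (i:ℝ) + b₀ * (j:ℝ)) * |f i| ^ α₀ * |g j| ^ β₀)
          (A₁ * (2:ℝ) ^ (a₁ * (i:ℝ) + b₁ * (j:ℝ)) * |f i| ^ α₁ * |g j| ^ β₁))
        = 0 := by simp only [hzero, tsum_zero]
      _ ≤ _ := zero_le
  -- abbreviations for the two sums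
  set T := ∑' i : ℤ, ENNReal.ofReal ((2:ℝ) ^ (c * (i:ℝ)) * |f i|) with hTdef
  set S := ∑' j : ℤ, ENNReal.ofReal ((2:ℝ) ^ (d * (j:ℝ)) * |g j|) with hSdef
  -- case T = 0
  rcases eq_or_ne T 0 with hT0 | hT0
  · have hf0 : ∀ i, |f i| = 0 := by
      intro i
      have h := (ENNReal.tsum_eq_zero.mp hT0) i
      rw [ENNReal.ofReal_eq_zero] at h
      have h2 : 0 < (2:ℝ) ^ (c * (i:ℝ)) := Real.rpow_pos_of_pos two_pos _
      have h3 : |f i| ≤ 0 := by nlinarith [abs_nonneg (f i)]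
      exact le_antisymm h3 (abs_nonneg _)
    have hminle : ∀ i j : ℤ, min
        (A₀ * (2:ℝ) ^ (a₀ * (i:ℝ) + b₀ * (j:ℝ)) * |f i| ^ α₀ * |g j| ^ β₀)
        (A₁ * (2:ℝ) ^ (a₁ * (i:ℝ) + b₁ * (j:ℝ)) * |f i| ^ α₁ * |g j| ^ β₁) ≤ 0 := by
      intro i j
      rcases hαor with h | h
      · exact le_trans (min_le_left _ _)
          (le_of_eq (by rw [hf0 i, Real.zero_rpow h]; ring))
      · exact le_trans (min_le_right _ _)
          (le_of_eq (by rw [hf0 i, Real.zero_rpow h]; ring))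
    have hzero : ∀ i j : ℤ, ENNReal.ofReal (min
        (A₀ * (2:ℝ) ^ (a₀ * (i:ℝ) + b₀ * (j:ℝ)) * |f i| ^ α₀ * |g j| ^ β₀)
        (A₁ * (2:ℝ) ^ (a₁ * (i:ℝ) + b₁ * (j:ℝ)) * |f i| ^ α₁ * |g j| ^ β₁)) = 0 := by
      intro i j
      refine le_antisymm ?_ zero_le
      calc ENNReal.ofReal _ ≤ ENNReal.ofReal 0 := ENNReal.ofReal_le_ofReal (hminle i j)
        _ = 0 := ENNReal.ofReal_zero
    calc ∑' (i : ℤ) (j : ℤ), ENNReal.ofReal (min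
          (A₀ * (2:ℝ) ^ (a₀ * (i:ℝ) + b₀ * (j:ℝ)) * |f i| ^ α₀ * |g j| ^ β₀)
          (A₁ * (2:ℝ) ^ (a₁ * (i:ℝ) + b₁ * (j:ℝ)) * |f i| ^ α₁ * |g j| ^ β₁))
        = 0 := by simp only [hzero, tsum_zero]
      _ ≤ _ := zero_le
  -- case S = 0
  rcases eq_or_ne S 0 with hS0 | hS0
  · have hg0 : ∀ j, |g j| = 0 := by
      intro j
      have h := (ENNReal.tsum_eq_zero.mp hS0) j
      rw [ENNReal.ofReal_eq_zero] at h
      have h2 : 0 < (2:ℝ) ^ (d * (j:ℝ)) := Real.rpow_pos_of_pos two_pos _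
      have h3 : |g j| ≤ 0 := by nlinarith [abs_nonneg (g j)]
      exact le_antisymm h3 (abs_nonneg _)
    have hminle : ∀ i j : ℤ, min
        (A₀ * (2:ℝ) ^ (a₀ * (i:ℝ) + b₀ * (j:ℝ)) * |f i| ^ α₀ * |g j| ^ β₀)
        (A₁ * (2:ℝ) ^ (a₁ * (i:ℝ) + b₁ * (j:ℝ)) * |f i| ^ α₁ * |g j| ^ β₁) ≤ 0 := by
      intro i j
      rcases hβor with h | h
      · exact le_trans (min_le_left _ _)
          (le_of_eq (by rw [hg0 j, Real.zero_rpow h]; ring))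
      · exact le_trans (min_le_right _ _)
          (le_of_eq (by rw [hg0 j, Real.zero_rpow h]; ring))
    have hzero : ∀ i j : ℤ, ENNReal.ofReal (min
        (A₀ * (2:ℝ) ^ (a₀ * (i:ℝ) + b₀ * (j:ℝ)) * |f i| ^ α₀ * |g j| ^ β₀)
        (A₁ * (2:ℝ) ^ (a₁ * (i:ℝ) + b₁ * (j:ℝ)) * |f i| ^ α₁ * |g j| ^ β₁)) = 0 := by
      intro i j
      refine le_antisymm ?_ zero_le
      calc ENNReal.ofReal _ ≤ ENNReal.ofReal 0 := ENNReal.ofReal_le_ofReal (hminle i j)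
        _ = 0 := ENNReal.ofReal_zero
    calc ∑' (i : ℤ) (j : ℤ), ENNReal.ofReal (min
          (A₀ * (2:ℝ) ^ (a₀ * (i:ℝ) + b₀ * (j:ℝ)) * |f i| ^ α₀ * |g j| ^ β₀)
          (A₁ * (2:ℝ) ^ (a₁ * (i:ℝ) + b₁ * (j:ℝ)) * |f i| ^ α₁ * |g j| ^ β₁))
        = 0 := by simp only [hzero, tsum_zero]
      _ ≤ _ := zero_le
  have hAprodpos : 0 < A₀ ^ (1 - θ) * A₁ ^ θ := by positivity
  have hApne : ENNReal.ofReal (A₀ ^ (1 - θ) * A₁ ^ θ) ≠ 0 := by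
    simp [ENNReal.ofReal_eq_zero, not_le, hAprodpos]
  -- case T = ⊤
  rcases eq_or_ne T ⊤ with hTtop | hTtop
  · have hRHS : ((1 + K.toNNReal : ℝ≥0) : ℝ≥0∞) * ENNReal.ofReal (A₀ ^ (1 - θ) * A₁ ^ θ) *
        T ^ P * S ^ Q = ⊤ := by
      rw [hTtop, ENNReal.top_rpow_of_pos hP, ENNReal.mul_top (mul_ne_zero hC0 hApne),
        ENNReal.top_mul (by simp [ENNReal.rpow_eq_zero_iff, hS0, not_lt.mpr hQ.le])]
    rw [hRHS]
    exact le_top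
  -- case S = ⊤
  rcases eq_or_ne S ⊤ with hStop | hStop
  · have hRHS : ((1 + K.toNNReal : ℝ≥0) : ℝ≥0∞) * ENNReal.ofReal (A₀ ^ (1 - θ) * A₁ ^ θ) *
        T ^ P * S ^ Q = ⊤ := by
      rw [hStop, ENNReal.top_rpow_of_pos hQ, ENNReal.mul_top]
      apply mul_ne_zero (mul_ne_zero hC0 hApne)
      simp [ENNReal.rpow_eq_zero_iff, hT0, not_lt.mpr hP.le]
    rw [hRHS]
    exact le_top
  -- main case
  have htT : 0 < T.toReal := ENNReal.toReal_pos hT0 hTtop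
  have hsS : 0 < S.toReal := ENNReal.toReal_pos hS0 hStop
  set tT := T.toReal with htTdef
  set sS := S.toReal with hsSdef
  set MR := A₀ ^ (1 - θ) * A₁ ^ θ * tT ^ P * sS ^ Q with hMRdef
  have hMRpos : 0 < MR := by positivity
  have hE₀pos : 0 < A₀ * tT ^ α₀ * sS ^ β₀ := by positivity
  have hE₁pos : 0 < A₁ * tT ^ α₁ * sS ^ β₁ := by positivity
  have hlog2 : Real.log 2 ≠ 0 := ne_of_gt (Real.log_pos one_lt_two)
  set x := (Real.log (A₀ * tT ^ α₀ * sS ^ β₀) - Real.log (A₁ * tT ^ α₁ * sS ^ β₁)) /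
    Real.log 2 with hxdef
  have hx : x * Real.log 2 = Real.log (A₀ * tT ^ α₀ * sS ^ β₀)
      - Real.log (A₁ * tT ^ α₁ * sS ^ β₁) := by
    rw [hxdef, div_mul_cancel₀ _ hlog2]
  have hlogE₀ : Real.log (A₀ * tT ^ α₀ * sS ^ β₀)
      = Real.log A₀ + α₀ * Real.log tT + β₀ * Real.log sS := by
    rw [Real.log_mul (by positivity) (by positivity),
      Real.log_mul (by positivity) (by positivity),
      Real.log_rpow htT, Real.log_rpow hsS]
  have hlogE₁ : Real.log (A₁ * tT ^ α₁ * sS ^ β₁)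
      = Real.log A₁ + α₁ * Real.log tT + β₁ * Real.log sS := by
    rw [Real.log_mul (by positivity) (by positivity),
      Real.log_mul (by positivity) (by positivity),
      Real.log_rpow htT, Real.log_rpow hsS]
  have hlogMR : Real.log MR = (1 - θ) * Real.log A₀ + θ * Real.log A₁
      + P * Real.log tT + Q * Real.log sS := by
    rw [hMRdef, Real.log_mul (by positivity) (by positivity),
      Real.log_mul (by positivity) (by positivity),
      Real.log_mul (by positivity) (by positivity),
      Real.log_rpow hA₀', Real.log_rpow hA₁', Real.log_rpow htT, Real.log_rpow hsS]
  have hee₀ : (θ * x) * Real.log 2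
      = Real.log A₀ + α₀ * Real.log tT + β₀ * Real.log sS - Real.log MR := by
    have h1 : (θ * x) * Real.log 2 = θ * (Real.log (A₀ * tT ^ α₀ * sS ^ β₀)
        - Real.log (A₁ * tT ^ α₁ * sS ^ β₁)) := by
      rw [mul_assoc, hx]
    rw [h1, hlogE₀, hlogE₁, hlogMR, hPdef, hQdef]
    ring
  have hee₁ : (-(1 - θ) * x) * Real.log 2
      = Real.log A₁ + α₁ * Real.log tT + β₁ * Real.log sS - Real.log MR := by
    have h1 : (-(1 - θ) * x) * Real.log 2 = -(1 - θ) * (Real.log (A₀ * tT ^ α₀ * sS ^ β₀)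
        - Real.log (A₁ * tT ^ α₁ * sS ^ β₁)) := by
      rw [mul_assoc, hx]
    rw [h1, hlogE₀, hlogE₁, hlogMR, hPdef, hQdef]
    ring
  set F' : ℤ → ℝ≥0∞ := fun i => ENNReal.ofReal ((2:ℝ) ^ (c * (i:ℝ)) * |f i| / tT) with hF'def
  set G' : ℤ → ℝ≥0∞ := fun j => ENNReal.ofReal ((2:ℝ) ^ (d * (j:ℝ)) * |g j| / sS) with hG'def
  have hofT : ENNReal.ofReal tT = T := ENNReal.ofReal_toReal hTtop
  have hofS : ENNReal.ofReal sS = S := ENNReal.ofReal_toReal hStop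
  have hF'sum : (∑' i, F' i) ≤ 1 := by
    have heq : ∀ i : ℤ, F' i = ENNReal.ofReal ((2:ℝ) ^ (c * (i:ℝ)) * |f i|) * (ENNReal.ofReal tT)⁻¹ := by
      intro i
      rw [hF'def]
      simp only
      rw [ENNReal.ofReal_div_of_pos htT, div_eq_mul_inv]
    calc (∑' i, F' i) = (∑' i : ℤ, ENNReal.ofReal ((2:ℝ) ^ (c * (i:ℝ)) * |f i|)) * (ENNReal.ofReal tT)⁻¹ := by
          rw [tsum_congr heq, ENNReal.tsum_mul_right]
      _ = T * T⁻¹ := by rw [hofT]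
      _ = 1 := ENNReal.mul_inv_cancel hT0 hTtop
      _ ≤ 1 := le_rfl
  have hG'sum : (∑' j, G' j) ≤ 1 := by
    have heq : ∀ j : ℤ, G' j = ENNReal.ofReal ((2:ℝ) ^ (d * (j:ℝ)) * |g j|) * (ENNReal.ofReal sS)⁻¹ := by
      intro j
      rw [hG'def]
      simp only
      rw [ENNReal.ofReal_div_of_pos hsS, div_eq_mul_inv]
    calc (∑' j, G' j) = (∑' j : ℤ, ENNReal.ofReal ((2:ℝ) ^ (d * (j:ℝ)) * |g j|)) * (ENNReal.ofReal sS)⁻¹ := by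
          rw [tsum_congr heq, ENNReal.tsum_mul_right]
      _ = S * S⁻¹ := by rw [hofS]
      _ = 1 := ENNReal.mul_inv_cancel hS0 hStop
      _ ≤ 1 := le_rfl
  -- per-term identity
  have hterm : ∀ i j : ℤ, ENNReal.ofReal (min
      (A₀ * (2:ℝ) ^ (a₀ * (i:ℝ) + b₀ * (j:ℝ)) * |f i| ^ α₀ * |g j| ^ β₀)
      (A₁ * (2:ℝ) ^ (a₁ * (i:ℝ) + b₁ * (j:ℝ)) * |f i| ^ α₁ * |g j| ^ β₁))
      = ENNReal.ofReal MR * min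
        ((2:ℝ≥0∞) ^ ((a₀ - c*α₀)*(i:ℝ) + (b₀ - d*β₀)*(j:ℝ) + θ*x) * F' i ^ α₀ * G' j ^ β₀)
        ((2:ℝ≥0∞) ^ (-((1 - θ)/θ * ((a₀ - c*α₀)*(i:ℝ) + (b₀ - d*β₀)*(j:ℝ) + θ*x)))
          * F' i ^ α₁ * G' j ^ β₁) := by
    intro i j
    have hr0 : A₀ * (2:ℝ) ^ (a₀ * (i:ℝ) + b₀ * (j:ℝ)) * |f i| ^ α₀ * |g j| ^ β₀
        = MR * ((2:ℝ) ^ ((a₀ - c*α₀)*(i:ℝ) + (b₀ - d*β₀)*(j:ℝ) + θ*x)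
          * ((2:ℝ) ^ (c * (i:ℝ)) * |f i| / tT) ^ α₀
          * ((2:ℝ) ^ (d * (j:ℝ)) * |g j| / sS) ^ β₀) :=
      S10_argid hA₀' hMRpos htT hsS hα₀0 hβ₀0 a₀ b₀ c d (i:ℝ) (j:ℝ) (θ*x) hee₀
        |f i| |g j| (abs_nonneg _) (abs_nonneg _)
    have hr1 : A₁ * (2:ℝ) ^ (a₁ * (i:ℝ) + b₁ * (j:ℝ)) * |f i| ^ α₁ * |g j| ^ β₁
        = MR * ((2:ℝ) ^ (-((1 - θ)/θ * ((a₀ - c*α₀)*(i:ℝ) + (b₀ - d*β₀)*(j:ℝ) + θ*x)))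
          * ((2:ℝ) ^ (c * (i:ℝ)) * |f i| / tT) ^ α₁
          * ((2:ℝ) ^ (d * (j:ℝ)) * |g j| / sS) ^ β₁) := by
      have h1 := S10_argid hA₁' hMRpos htT hsS hα₁0 hβ₁0 a₁ b₁ c d (i:ℝ) (j:ℝ) (-(1-θ)*x) hee₁
        |f i| |g j| (abs_nonneg _) (abs_nonneg _)
      have hw1ij : (a₁ - c*α₁)*(i:ℝ) + (b₁ - d*β₁)*(j:ℝ) + (-(1-θ)*x)
          = -((1 - θ)/θ * ((a₀ - c*α₀)*(i:ℝ) + (b₀ - d*β₀)*(j:ℝ) + θ*x)) := by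
        rw [hrelγ, hrelδ]
        field_simp
        ring
      rw [h1, hw1ij]
    have hof0 : ENNReal.ofReal (A₀ * (2:ℝ) ^ (a₀ * (i:ℝ) + b₀ * (j:ℝ)) * |f i| ^ α₀ * |g j| ^ β₀)
        = ENNReal.ofReal MR *
          ((2:ℝ≥0∞) ^ ((a₀ - c*α₀)*(i:ℝ) + (b₀ - d*β₀)*(j:ℝ) + θ*x) * F' i ^ α₀ * G' j ^ β₀) := by
      rw [hr0, ENNReal.ofReal_mul hMRpos.le]
      congr 1
      rw [ENNReal.ofReal_mul (by positivity), ENNReal.ofReal_mul (by positivity),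
        ← ENNReal.ofReal_rpow_of_pos two_pos,
        ← ENNReal.ofReal_rpow_of_nonneg (by positivity) hα₀0,
        ← ENNReal.ofReal_rpow_of_nonneg (by positivity) hβ₀0]
      norm_num
      rfl
    have hof1 : ENNReal.ofReal (A₁ * (2:ℝ) ^ (a₁ * (i:ℝ) + b₁ * (j:ℝ)) * |f i| ^ α₁ * |g j| ^ β₁)
        = ENNReal.ofReal MR *
          ((2:ℝ≥0∞) ^ (-((1 - θ)/θ * ((a₀ - c*α₀)*(i:ℝ) + (b₀ - d*β₀)*(j:ℝ) + θ*x)))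
            * F' i ^ α₁ * G' j ^ β₁) := by
      rw [hr1, ENNReal.ofReal_mul hMRpos.le]
      congr 1
      rw [ENNReal.ofReal_mul (by positivity), ENNReal.ofReal_mul (by positivity),
        ← ENNReal.ofReal_rpow_of_pos two_pos,
        ← ENNReal.ofReal_rpow_of_nonneg (by positivity) hα₁0,
        ← ENNReal.ofReal_rpow_of_nonneg (by positivity) hβ₁0]
      norm_num
      rfl
    calc ENNReal.ofReal (min
        (A₀ * (2:ℝ) ^ (a₀ * (i:ℝ) + b₀ * (j:ℝ)) * |f i| ^ α₀ * |g j| ^ β₀)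
        (A₁ * (2:ℝ) ^ (a₁ * (i:ℝ) + b₁ * (j:ℝ)) * |f i| ^ α₁ * |g j| ^ β₁))
        = min (ENNReal.ofReal (A₀ * (2:ℝ) ^ (a₀ * (i:ℝ) + b₀ * (j:ℝ)) * |f i| ^ α₀ * |g j| ^ β₀))
            (ENNReal.ofReal (A₁ * (2:ℝ) ^ (a₁ * (i:ℝ) + b₁ * (j:ℝ)) * |f i| ^ α₁ * |g j| ^ β₁)) :=
          Monotone.map_min (fun _ _ h => ENNReal.ofReal_le_ofReal h)
      _ = _ := by rw [hof0, hof1, min_mul_mul_left]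
  -- conclude
  have hMR' : ENNReal.ofReal MR = ENNReal.ofReal (A₀ ^ (1 - θ) * A₁ ^ θ) * T ^ P * S ^ Q := by
    rw [hMRdef, ENNReal.ofReal_mul (by positivity), ENNReal.ofReal_mul (by positivity),
      ← ENNReal.ofReal_rpow_of_pos htT, ← ENNReal.ofReal_rpow_of_pos hsS, hofT, hofS]
  calc ∑' (i : ℤ) (j : ℤ), ENNReal.ofReal (min
        (A₀ * (2:ℝ) ^ (a₀ * (i:ℝ) + b₀ * (j:ℝ)) * |f i| ^ α₀ * |g j| ^ β₀)
        (A₁ * (2:ℝ) ^ (a₁ * (i:ℝ) + b₁ * (j:ℝ)) * |f i| ^ α₁ * |g j| ^ β₁))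
      = ENNReal.ofReal MR * ∑' (i : ℤ) (j : ℤ), min
          ((2:ℝ≥0∞) ^ ((a₀ - c*α₀)*(i:ℝ) + (b₀ - d*β₀)*(j:ℝ) + θ*x) * F' i ^ α₀ * G' j ^ β₀)
          ((2:ℝ≥0∞) ^ (-((1 - θ)/θ * ((a₀ - c*α₀)*(i:ℝ) + (b₀ - d*β₀)*(j:ℝ) + θ*x)))
            * F' i ^ α₁ * G' j ^ β₁) := by
        rw [← ENNReal.tsum_mul_left]
        refine tsum_congr fun i => ?_
        rw [← ENNReal.tsum_mul_left]
        exact tsum_congr fun j => hterm i j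
    _ ≤ ENNReal.ofReal MR * K := by
        gcongr
        exact hK (θ*x) F' G' hF'sum hG'sum
    _ ≤ (ENNReal.ofReal (A₀ ^ (1 - θ) * A₁ ^ θ) * T ^ P * S ^ Q) *
          ((1 + K.toNNReal : ℝ≥0) : ℝ≥0∞) := by
        rw [hMR']
        exact mul_le_mul' le_rfl hKC
    _ = ((1 + K.toNNReal : ℝ≥0) : ℝ≥0∞) * ENNReal.ofReal (A₀ ^ (1 - θ) * A₁ ^ θ) *
          T ^ P * S ^ Q := by ring
end

section
/- There exists a finite constant C such that for every α > 0 and all Lebesgue measurable sets E, F ⊂ ℝ², ∫_{ℝ²} ∫_{ℝ²} χ_{{|s₁t₂ − s₂t₁| ≤ α}}(s,t) · χ_E(s) χ_F(t) ds dt ≤ C α |E|^{1/2} |F|^{1/2}. -/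
/-!
Split the pairs `(s, t)` according to whether `‖t‖ ≤ λ ‖s‖` or `‖s‖ ≤ λ⁻¹ ‖t‖`. For fixed `s`, the
`t` of the first kind lie in the strip `|s × t| ≤ α` of width `2α / ‖s‖` cut off at `‖t‖ ≤ λ ‖s‖`,
a set of area at most `4αλ`; symmetrically for the second kind. Hence the double integral is at
most `4α (λ |E| + λ⁻¹ |F|)`, and `λ = (|F| / |E|)^{1/2}` gives the bound with `C = 8`.
-/

open MeasureTheory Set
open scoped ENNReal NNReal

theorem ENNReal.le_two_mul_mul_rpow_half_of_forall_le {X a b c : ℝ≥0∞} (hc : c ≠ 0)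
    (hab : X ≤ a * b) (h : ∀ t : ℝ≥0, t ≠ 0 → X ≤ c * (t * a + t⁻¹ * b)) :
    X ≤ 2 * c * a ^ (1 / 2 : ℝ) * b ^ (1 / 2 : ℝ) := by
  rcases eq_or_ne a 0 with rfl | ha0
  · simp_all
  rcases eq_or_ne b 0 with rfl | hb0
  · simp_all
  rcases eq_or_ne a ⊤ with rfl | ha
  · simp [hc, hb0]
  rcases eq_or_ne b ⊤ with rfl | hb
  · simp [hc, ha0]
  lift a to ℝ≥0 using ha
  lift b to ℝ≥0 using hb
  have ha0' : NNReal.sqrt a ≠ 0 := by simpa using ha0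
  have hb0' : NNReal.sqrt b ≠ 0 := by simpa using hb0
  -- `t = √b / √a` balances the two terms.
  have key : NNReal.sqrt b / NNReal.sqrt a * a + (NNReal.sqrt b / NNReal.sqrt a)⁻¹ * b
      = 2 * NNReal.sqrt a * NNReal.sqrt b := by
    have hxy : ∀ x y : ℝ≥0, x ≠ 0 → y ≠ 0 → y / x * (x * x) + (y / x)⁻¹ * (y * y) = 2 * x * y := by
      intro x y hx hy
      field_simp
      ring
    simpa only [NNReal.mul_self_sqrt] using hxy _ _ ha0' hb0'
  have := h (NNReal.sqrt b / NNReal.sqrt a) (div_ne_zero hb0' ha0')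
  rw [← ENNReal.coe_mul, ← ENNReal.coe_mul, ← ENNReal.coe_add, key] at this
  rw [← ENNReal.coe_rpow_of_nonneg _ (by norm_num), ← ENNReal.coe_rpow_of_nonneg _ (by norm_num),
    ← NNReal.sqrt_eq_rpow, ← NNReal.sqrt_eq_rpow]
  calc X ≤ c * ↑(2 * NNReal.sqrt a * NNReal.sqrt b) := this
    _ = _ := by push_cast; ring

theorem MeasureTheory.Measure.prod_le_mul_of_forall_slice_le {α β : Type*} [MeasurableSpace α]
    [MeasurableSpace β] {μ : Measure α} {ν : Measure β} [SFinite ν] {S : Set (α × β)}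
    (hS : MeasurableSet S) {A : Set α} (hA : MeasurableSet A) (hSA : ∀ p ∈ S, p.1 ∈ A)
    {c : ℝ≥0∞} (hc : ∀ x ∈ A, ν (Prod.mk x ⁻¹' S) ≤ c) : μ.prod ν S ≤ c * μ A := by
  rw [Measure.prod_apply hS, ← lintegral_indicator_const hA]
  refine lintegral_mono fun x => ?_
  by_cases hx : x ∈ A
  · simpa [hx] using hc x hx
  · have : Prod.mk x ⁻¹' S = ∅ := eq_empty_of_forall_notMem fun y hy => hx (hSA _ hy)
    simp [this]

theorem MeasureTheory.lintegral_lintegral_indicator_mul_indicator_mul_indicator {α β : Type*}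
    [MeasurableSpace α] [MeasurableSpace β] {μ : Measure α} {ν : Measure β} [SFinite ν]
    {S : Set (α × β)} (hS : MeasurableSet S) {A : Set α} {B : Set β} (hA : MeasurableSet A)
    (hB : MeasurableSet B) :
    ∫⁻ x, ∫⁻ y, S.indicator (fun _ => 1) (x, y) * A.indicator (fun _ => 1) x
      * B.indicator (fun _ => 1) y ∂ν ∂μ = μ.prod ν (S ∩ A ×ˢ B) := by
  rw [← lintegral_indicator_one (hS.inter (hA.prod hB)),
    lintegral_prod _ (measurable_one.indicator (hS.inter (hA.prod hB))).aemeasurable]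
  simp_rw [inter_indicator_one, Pi.mul_apply, indicator_prod_one, mul_assoc]
  rfl

theorem EuclideanSpace.volume_setOf_forall_abs_le {ι : Type*} [Fintype ι] (r : ι → ℝ) :
    volume {u : EuclideanSpace ℝ ι | ∀ i, |u i| ≤ r i} = ∏ i, ENNReal.ofReal (2 * r i) := by
  have : {u : EuclideanSpace ℝ ι | ∀ i, |u i| ≤ r i} =
      (MeasurableEquiv.toLp 2 (ι → ℝ)).symm ⁻¹' univ.pi fun i => Icc (-r i) (r i) := by
    ext u
    simp only [mem_ofPred_eq, abs_le, mem_preimage, mem_univ_pi, mem_Icc]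
    rfl
  rw [this, (EuclideanSpace.volume_preserving_symm_measurableEquiv_toLp ι).measure_preimage
    (MeasurableSet.univ_pi fun _ => measurableSet_Icc).nullMeasurableSet, volume_pi_pi]
  simp only [Real.volume_Icc, sub_neg_eq_add, two_mul]

local notation "ℝ²" => EuclideanSpace ℝ (Fin 2)

theorem volume_setOf_abs_det_le_and_norm_le (w : ℝ²) {β : ℝ} (hβ : 0 ≤ β) (c : ℝ≥0) :
    volume {t : ℝ² | |w 0 * t 1 - w 1 * t 0| ≤ β ∧ ‖t‖ ≤ c * ‖w‖}
      ≤ ENNReal.ofReal (4 * β) * c := by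
  rcases eq_or_ne w 0 with rfl | hw
  · refine le_of_eq_of_le (measure_mono_null (fun t ht => ?_) (measure_singleton 0)) zero_le
    simpa using ht.2
  have hw2 : 0 < ‖w‖ ^ 2 := by positivity
  set L := Matrix.toEuclideanLin (!![w 0, w 1; -w 1, w 0] : Matrix (Fin 2) (Fin 2) ℝ)
  have hdet : LinearMap.det L = ‖w‖ ^ 2 := by
    rw [LinearMap.det_toLpLin, Matrix.det_fin_two_of, EuclideanSpace.real_norm_sq_eq,
      Fin.sum_univ_two]
    ring
  have hsub : {t : ℝ² | |w 0 * t 1 - w 1 * t 0| ≤ β ∧ ‖t‖ ≤ c * ‖w‖} ⊆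
      L ⁻¹' {u | ∀ i, |u i| ≤ ![c * ‖w‖ ^ 2, β] i} := by
    rintro t ⟨hst, hnorm⟩ i
    have hL0 : L t 0 = inner ℝ w t := by
      simp [L, Matrix.mulVec, dotProduct, Fin.sum_univ_two, PiLp.inner_apply]
      ring
    have hL1 : L t 1 = w 0 * t 1 - w 1 * t 0 := by
      simp [L, Matrix.mulVec, dotProduct, Fin.sum_univ_two]
      ring
    fin_cases i
    · simp only [Fin.zero_eta, Fin.isValue, Matrix.cons_val_zero, hL0]
      calc |inner ℝ w t| ≤ ‖w‖ * ‖t‖ := abs_real_inner_le_norm w t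
        _ ≤ ‖w‖ * (c * ‖w‖) := by gcongr
        _ = c * ‖w‖ ^ 2 := by ring
    · simpa [hL1] using hst
  calc _ ≤ volume (L ⁻¹' {u | ∀ i, |u i| ≤ ![c * ‖w‖ ^ 2, β] i}) := measure_mono hsub
    _ = ENNReal.ofReal (4 * β) * c := by
      rw [Measure.addHaar_preimage_linearMap _ (hdet ▸ hw2.ne'),
        EuclideanSpace.volume_setOf_forall_abs_le, Fin.prod_univ_two, hdet]
      simp only [Matrix.cons_val_zero, Matrix.cons_val_one, Matrix.cons_val_fin_one]
      rw [← ENNReal.ofReal_coe_nnreal, ← ENNReal.ofReal_mul (by positivity),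
        ← ENNReal.ofReal_mul (by positivity), ← ENNReal.ofReal_mul (by positivity),
        abs_of_pos (inv_pos.2 hw2)]
      congr 1
      field_simp
      ring

def detSublevel (α : ℝ) : Set (ℝ² × ℝ²) := {q | |q.1 0 * q.2 1 - q.1 1 * q.2 0| ≤ α}

theorem measurableSet_detSublevel (α : ℝ) : MeasurableSet (detSublevel α) :=
  measurableSet_le (by fun_prop) measurable_const

theorem preimage_swap_detSublevel (α : ℝ) : Prod.swap ⁻¹' detSublevel α = detSublevel α := by
  ext q
  simp only [detSublevel, mem_preimage, mem_ofPred_eq, Prod.fst_swap, Prod.snd_swap]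
  rw [← abs_neg]
  ring_nf

theorem measurableSet_detSublevel_inter_cone (α : ℝ) (c : ℝ≥0) {A : Set ℝ²}
    (hA : MeasurableSet A) :
    MeasurableSet (detSublevel α ∩ {q | q.1 ∈ A ∧ ‖q.2‖ ≤ c * ‖q.1‖}) :=
  (measurableSet_detSublevel α).inter ((hA.preimage measurable_fst).inter
    (measurableSet_le (f := fun q : ℝ² × ℝ² => ‖q.2‖) (g := fun q => c * ‖q.1‖)
      (by fun_prop) (by fun_prop)))

theorem volume_detSublevel_inter_cone_le {α : ℝ} (hα : 0 ≤ α) (c : ℝ≥0) {A : Set ℝ²}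
    (hA : MeasurableSet A) :
    (volume.prod volume) (detSublevel α ∩ {q | q.1 ∈ A ∧ ‖q.2‖ ≤ c * ‖q.1‖})
      ≤ ENNReal.ofReal (4 * α) * c * volume A := by
  refine Measure.prod_le_mul_of_forall_slice_le (measurableSet_detSublevel_inter_cone α c hA) hA
    (fun q hq => hq.2.1) fun s _ => ?_
  refine le_trans (measure_mono ?_) (volume_setOf_abs_det_le_and_norm_le s hα c)
  exact fun t ht => ⟨ht.1, ht.2.2⟩

theorem volume_detSublevel_inter_prod_le {α : ℝ} (hα : 0 ≤ α) {E F : Set ℝ²}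
    (hE : MeasurableSet E) (hF : MeasurableSet F) {t : ℝ≥0} (ht : t ≠ 0) :
    (volume.prod volume) (detSublevel α ∩ E ×ˢ F)
      ≤ ENNReal.ofReal (4 * α) * (t * volume E + t⁻¹ * volume F) := by
  have hcover : detSublevel α ∩ E ×ˢ F ⊆ (detSublevel α ∩ {q | q.1 ∈ E ∧ ‖q.2‖ ≤ t * ‖q.1‖}) ∪
      Prod.swap ⁻¹' (detSublevel α ∩ {q | q.1 ∈ F ∧ ‖q.2‖ ≤ t⁻¹ * ‖q.1‖}) := by
    rintro ⟨s, u⟩ ⟨hdet, hs, hu⟩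
    rcases le_total ‖u‖ (t * ‖s‖) with h | h
    · exact Or.inl ⟨hdet, hs, h⟩
    · refine Or.inr ⟨(preimage_swap_detSublevel α).symm ▸ hdet, hu, ?_⟩
      simp only [Prod.fst_swap, Prod.snd_swap, NNReal.coe_inv]
      rw [inv_mul_eq_div, le_div_iff₀' (by positivity)]
      exact h
  calc _ ≤ _ := measure_mono hcover
    _ ≤ _ := measure_union_le _ _
    _ ≤ ENNReal.ofReal (4 * α) * t * volume E + ENNReal.ofReal (4 * α) * ↑t⁻¹ * volume F := by
      rw [Measure.measurePreserving_swap.measure_preimage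
        (measurableSet_detSublevel_inter_cone α t⁻¹ hF).nullMeasurableSet]
      exact add_le_add (volume_detSublevel_inter_cone_le hα t hE)
        (volume_detSublevel_inter_cone_le hα t⁻¹ hF)
    _ = _ := by ring

/-- the determinant sublevel set functional bound in `ℝ²`. -/
theorem statement12 :
    ∃ C : ℝ, 0 ≤ C ∧ ∀ α : ℝ, 0 < α →
      ∀ E F : Set (EuclideanSpace ℝ (Fin 2)), MeasurableSet E → MeasurableSet F →
      (∫⁻ s, ∫⁻ t,
          ({q : EuclideanSpace ℝ (Fin 2) × EuclideanSpace ℝ (Fin 2) |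
              |q.1 0 * q.2 1 - q.1 1 * q.2 0| ≤ α}.indicator (fun _ => (1 : ℝ≥0∞)) (s, t))
            * E.indicator (fun _ => (1 : ℝ≥0∞)) s * F.indicator (fun _ => (1 : ℝ≥0∞)) t)
        ≤ ENNReal.ofReal (C * α) * (volume E) ^ (1/2 : ℝ) * (volume F) ^ (1/2 : ℝ) := by
  refine ⟨8, by norm_num, fun α hα E F hE hF => ?_⟩
  refine (lintegral_lintegral_indicator_mul_indicator_mul_indicator
    (measurableSet_detSublevel α) hE hF).trans_le ?_
  rw [show 8 * α = 2 * (4 * α) by ring, ENNReal.ofReal_mul zero_le_two, ENNReal.ofReal_ofNat]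
  refine ENNReal.le_two_mul_mul_rpow_half_of_forall_le (by simpa using hα) ?_
    fun t ht => volume_detSublevel_inter_prod_le hα.le hE hF ht
  exact (measure_mono inter_subset_right).trans_eq (Measure.prod_prod E F)
end

section
/- For i ∈ ℤ, let A_i denote the annulus {x ∈ ℝ³ : 2^{i−1} ≤ ‖x‖ < 2^i}, where ‖·‖ is the Euclidean norm. There exists a finite constant C such that for all α > 0, all i, j ∈ ℤ, and all Lebesgue measurable sets E, F ⊂ ℝ³, ∫_{ℝ³} ∫_{ℝ³} χ_{{‖s‖²‖t‖² − (s·t)² ≤ α}}(s,t) · χ_{E ∩ A_i}(s) χ_{F ∩ A_j}(t) ds dt ≤ C α · min{ 2^{i−2j} |F ∩ A_j|, 2^{−2i+j} |E ∩ A_i| }. -/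
open MeasureTheory Set
open scoped ENNReal NNReal

/-- The annulus `{x ∈ ℝ³ : 2^(i-1) ≤ ‖x‖ < 2^i}`. -/
def Ann3 (i : ℤ) : Set (EuclideanSpace ℝ (Fin 3)) :=
  {x | (2 : ℝ) ^ (i - 1) ≤ ‖x‖ ∧ ‖x‖ < (2 : ℝ) ^ i}

lemma ofReal_two_zpow (n : ℤ) : ENNReal.ofReal ((2:ℝ)^n) = (2:ℝ≥0∞)^n := by
  induction n using Int.rec with
  | ofNat m => simp [ENNReal.ofReal_pow, ENNReal.ofReal_ofNat]
  | negSucc m =>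
    rw [zpow_negSucc, zpow_negSucc, ENNReal.ofReal_inv_of_pos (by positivity),
      ENNReal.ofReal_pow (by norm_num), ENNReal.ofReal_ofNat]

lemma box_vol (a b c : ℝ) :
    volume {x : EuclideanSpace ℝ (Fin 3) | |x 0| ≤ a ∧ |x 1| ≤ b ∧ |x 2| ≤ c}
      ≤ ENNReal.ofReal (2*a) * ENNReal.ofReal (2*b) * ENNReal.ofReal (2*c) := by
  have hmp := EuclideanSpace.volume_preserving_symm_measurableEquiv_toLp (Fin 3)
  have hset : {x : EuclideanSpace ℝ (Fin 3) | |x 0| ≤ a ∧ |x 1| ≤ b ∧ |x 2| ≤ c}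
      = (MeasurableEquiv.toLp 2 (Fin 3 → ℝ)).symm ⁻¹'
        (Set.univ.pi fun k => Icc (-(![a,b,c] k)) (![a,b,c] k)) := by
    ext x
    simp only [mem_setOf_eq, mem_preimage, mem_pi, mem_univ, mem_Icc, forall_true_left,
      Fin.forall_fin_succ]
    simp [abs_le, and_assoc]
  rw [hset, hmp.measure_preimage (MeasurableSet.univ_pi (fun k => measurableSet_Icc)).nullMeasurableSet,
    volume_pi_pi]
  simp [Fin.prod_univ_three, Real.volume_Icc]
  rw [show a + a = 2*a by ring, show b + b = 2*b by ring, show c + c = 2*c by ring]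
  rw [ENNReal.ofReal_mul (by norm_num), ENNReal.ofReal_mul (by norm_num),
    ENNReal.ofReal_mul (by norm_num), ENNReal.ofReal_ofNat]

lemma tube_vol (u : EuclideanSpace ℝ (Fin 3)) (hu : ‖u‖ = 1) (R β : ℝ) (hβ : 0 ≤ β) :
    volume {s : EuclideanSpace ℝ (Fin 3) | ‖s‖ ≤ R ∧ ‖s‖^2 - (inner ℝ s u : ℝ)^2 ≤ β}
      ≤ ENNReal.ofReal (2*R) * ENNReal.ofReal (2*Real.sqrt β) * ENNReal.ofReal (2*Real.sqrt β) := by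
  haveI : Subsingleton (({0} : Set (Fin 3)) : Type) :=
    (Set.subsingleton_coe _).mpr Set.subsingleton_singleton
  have hortho : Orthonormal ℝ (({0} : Set (Fin 3)).restrict (fun _ => u)) := by
    refine ⟨fun i => hu, fun i j hij => absurd (Subsingleton.elim i j) hij⟩
  obtain ⟨b, hb⟩ := hortho.exists_orthonormalBasis_extension_of_card_eq
    (by simp [finrank_euclideanSpace_fin])
  have hb0 : b 0 = u := hb 0 rfl
  set Box : Set (EuclideanSpace ℝ (Fin 3)) :=
    {x | |x 0| ≤ R ∧ |x 1| ≤ Real.sqrt β ∧ |x 2| ≤ Real.sqrt β} with hBox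
  have hBoxMeas : MeasurableSet Box := by
    have hc : ∀ k : Fin 3, Continuous fun x : EuclideanSpace ℝ (Fin 3) => |x k| :=
      fun k => (EuclideanSpace.proj k (𝕜 := ℝ)).continuous.abs
    have : IsClosed Box := by
      rw [hBox, show {x : EuclideanSpace ℝ (Fin 3) |
          |x 0| ≤ R ∧ |x 1| ≤ Real.sqrt β ∧ |x 2| ≤ Real.sqrt β}
        = {x | |x 0| ≤ R} ∩ ({x | |x 1| ≤ Real.sqrt β} ∩ {x | |x 2| ≤ Real.sqrt β}) from rfl]
      exact ((isClosed_le (hc 0) continuous_const)).inter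
        (((isClosed_le (hc 1) continuous_const)).inter
          ((isClosed_le (hc 2) continuous_const)))
    exact this.measurableSet
  have hsub : {s : EuclideanSpace ℝ (Fin 3) | ‖s‖ ≤ R ∧ ‖s‖^2 - (inner ℝ s u : ℝ)^2 ≤ β}
      ⊆ b.repr ⁻¹' Box := by
    intro s hs
    obtain ⟨h1, h2⟩ := hs
    have hR : 0 ≤ R := le_trans (norm_nonneg s) h1
    have hnorm : ‖b.repr s‖ = ‖s‖ := b.repr.norm_map s
    have hx0 : b.repr s 0 = (inner ℝ s u : ℝ) := by
      rw [b.repr_apply_apply, hb0, real_inner_comm]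
    set x0 : ℝ := b.repr s 0 with hdx0
    set x1 : ℝ := b.repr s 1 with hdx1
    set x2 : ℝ := b.repr s 2 with hdx2
    have hsum : x0^2 + x1^2 + x2^2 = ‖s‖^2 := by
      have h := congrArg (fun y : ℝ => y^2) (EuclideanSpace.norm_eq (b.repr s))
      simp only [hnorm] at h
      rw [h, Real.sq_sqrt (by positivity)]
      simp [Fin.sum_univ_three, ← hdx0, ← hdx1, ← hdx2]
    rw [← hx0] at h2
    have hkey : x1^2 + x2^2 ≤ β := by linarith
    have habs : ∀ y c : ℝ, y^2 ≤ c^2 → 0 ≤ c → |y| ≤ c := by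
      intro y c hy hc
      calc |y| = Real.sqrt (y^2) := (Real.sqrt_sq_eq_abs _).symm
        _ ≤ Real.sqrt (c^2) := Real.sqrt_le_sqrt hy
        _ = c := Real.sqrt_sq hc
    refine ⟨?_, ?_, ?_⟩
    · rw [← hdx0]; exact habs _ _ (by nlinarith [norm_nonneg s, sq_nonneg x1, sq_nonneg x2]) hR
    · rw [← hdx1]
      exact habs _ _ (by rw [Real.sq_sqrt hβ]; nlinarith) (Real.sqrt_nonneg β)
    · rw [← hdx2]
      exact habs _ _ (by rw [Real.sq_sqrt hβ]; nlinarith) (Real.sqrt_nonneg β)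
  calc volume {s : EuclideanSpace ℝ (Fin 3) | ‖s‖ ≤ R ∧ ‖s‖^2 - (inner ℝ s u : ℝ)^2 ≤ β}
      ≤ volume (b.repr ⁻¹' Box) := measure_mono hsub
    _ = volume Box := b.measurePreserving_repr.measure_preimage hBoxMeas.nullMeasurableSet
    _ ≤ _ := box_vol R (Real.sqrt β) (Real.sqrt β)

lemma tube_vol' (t : EuclideanSpace ℝ (Fin 3)) (ht : t ≠ 0) (R α : ℝ) (hα : 0 ≤ α) :
    volume {s : EuclideanSpace ℝ (Fin 3) |
        ‖s‖ ≤ R ∧ ‖s‖^2 * ‖t‖^2 - (∑ k : Fin 3, s k * t k)^2 ≤ α}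
      ≤ ENNReal.ofReal (8 * R * (α / ‖t‖^2)) := by
  by_cases hR : 0 ≤ R
  case neg =>
    convert_to volume (∅ : Set (EuclideanSpace ℝ (Fin 3))) ≤ _
    · congr 1
      ext s
      simp only [mem_setOf_eq, mem_empty_iff_false, iff_false]
      rintro ⟨h1, -⟩
      exact hR (le_trans (norm_nonneg s) h1)
    · simp
  have htn : (0:ℝ) < ‖t‖ := norm_pos_iff.mpr ht
  have hts : (0:ℝ) < ‖t‖^2 := by positivity
  set u : EuclideanSpace ℝ (Fin 3) := ‖t‖⁻¹ • t with hu_def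
  have hu : ‖u‖ = 1 := by
    rw [hu_def, norm_smul, norm_inv, norm_norm, inv_mul_cancel₀ htn.ne']
  have hdot : ∀ s : EuclideanSpace ℝ (Fin 3), (inner ℝ s t : ℝ) = ∑ k : Fin 3, s k * t k := by
    intro s
    simp [PiLp.inner_apply, RCLike.inner_apply, conj_trivial]
    exact Finset.sum_congr rfl fun k _ => mul_comm _ _
  have hseteq : {s : EuclideanSpace ℝ (Fin 3) |
        ‖s‖ ≤ R ∧ ‖s‖^2 * ‖t‖^2 - (∑ k : Fin 3, s k * t k)^2 ≤ α}
      = {s : EuclideanSpace ℝ (Fin 3) | ‖s‖ ≤ R ∧ ‖s‖^2 - (inner ℝ s u : ℝ)^2 ≤ α / ‖t‖^2} := by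
    ext s
    simp only [mem_setOf_eq, and_congr_right_iff]
    intro _
    have hiu : (inner ℝ s u : ℝ) = ‖t‖⁻¹ * (inner ℝ s t : ℝ) := real_inner_smul_right s t _
    rw [hiu, hdot]
    rw [show ‖s‖^2 - (‖t‖⁻¹ * (∑ k : Fin 3, s k * t k))^2
        = (‖s‖^2 * ‖t‖^2 - (∑ k : Fin 3, s k * t k)^2) / ‖t‖^2 by field_simp]
    exact (div_le_div_iff_of_pos_right hts).symm
  rw [hseteq]
  refine le_trans (tube_vol u hu R (α / ‖t‖^2) (by positivity)) ?_
  rw [← ENNReal.ofReal_mul (by linarith), ← ENNReal.ofReal_mul (by positivity)]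
  apply ENNReal.ofReal_le_ofReal
  rw [show 2*R*(2*Real.sqrt (α/‖t‖^2))*(2*Real.sqrt (α/‖t‖^2))
      = 8*R*(Real.sqrt (α/‖t‖^2)*Real.sqrt (α/‖t‖^2)) by ring,
    Real.mul_self_sqrt (by positivity)]


lemma section_bound (α : ℝ) (hα : 0 ≤ α) (i j : ℤ) (W : Set (EuclideanSpace ℝ (Fin 3)))
    (t : EuclideanSpace ℝ (Fin 3)) (htl : (2:ℝ)^(j-1) ≤ ‖t‖) :
    (∫⁻ s, ({q : EuclideanSpace ℝ (Fin 3) × EuclideanSpace ℝ (Fin 3) |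
        ‖q.1‖ ^ 2 * ‖q.2‖ ^ 2 - (∑ k : Fin 3, q.1 k * q.2 k) ^ 2 ≤ α}.indicator
          (fun _ => (1 : ℝ≥0∞)) (s, t))
        * (W ∩ Ann3 i).indicator (fun _ => (1 : ℝ≥0∞)) s)
      ≤ ENNReal.ofReal (32 * α) * (2:ℝ≥0∞) ^ (i - 2 * j) := by
  have ht0 : t ≠ 0 := by
    intro h
    rw [h, norm_zero] at htl
    exact absurd htl (not_le.mpr (by positivity))
  have htn : (0:ℝ) < ‖t‖ := norm_pos_iff.mpr ht0
  set G : Set (EuclideanSpace ℝ (Fin 3)) :=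
    {s | ‖s‖ ≤ (2:ℝ)^i ∧ ‖s‖^2 * ‖t‖^2 - (∑ k : Fin 3, s k * t k)^2 ≤ α} with hG_def
  have hGc : IsClosed G := by
    rw [show G = {s : EuclideanSpace ℝ (Fin 3) | ‖s‖ ≤ (2:ℝ)^i}
        ∩ {s | ‖s‖^2 * ‖t‖^2 - (∑ k : Fin 3, s k * t k)^2 ≤ α} from rfl]
    refine (isClosed_le continuous_norm continuous_const).inter
      (isClosed_le ?_ continuous_const)
    refine (((continuous_norm.pow 2).mul continuous_const).sub
      ((Continuous.pow ?_ 2)))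
    exact continuous_finset_sum _ fun k _ =>
      ((EuclideanSpace.proj (𝕜 := ℝ) k).continuous.mul continuous_const)
  have hGm : MeasurableSet G := hGc.measurableSet
  have hpt : ∀ s, ({q : EuclideanSpace ℝ (Fin 3) × EuclideanSpace ℝ (Fin 3) |
        ‖q.1‖ ^ 2 * ‖q.2‖ ^ 2 - (∑ k : Fin 3, q.1 k * q.2 k) ^ 2 ≤ α}.indicator
          (fun _ => (1 : ℝ≥0∞)) (s, t))
        * (W ∩ Ann3 i).indicator (fun _ => (1 : ℝ≥0∞)) s
      ≤ G.indicator (fun _ => (1:ℝ≥0∞)) s := by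
    intro s
    by_cases h1 : ‖s‖ ^ 2 * ‖t‖ ^ 2 - (∑ k : Fin 3, s k * t k) ^ 2 ≤ α
    · by_cases h2 : s ∈ W ∩ Ann3 i
      · have hsG : s ∈ G := ⟨le_of_lt h2.2.2, h1⟩
        rw [Set.indicator_of_mem (show ((s,t) : EuclideanSpace ℝ (Fin 3) × EuclideanSpace ℝ (Fin 3)) ∈ _ from h1),
          Set.indicator_of_mem h2, Set.indicator_of_mem hsG]
        simp
      · rw [Set.indicator_of_notMem h2]
        simp
    · have : ((s,t) : EuclideanSpace ℝ (Fin 3) × EuclideanSpace ℝ (Fin 3)) ∉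
          {q : EuclideanSpace ℝ (Fin 3) × EuclideanSpace ℝ (Fin 3) |
            ‖q.1‖ ^ 2 * ‖q.2‖ ^ 2 - (∑ k : Fin 3, q.1 k * q.2 k) ^ 2 ≤ α} := h1
      rw [Set.indicator_of_notMem this]
      simp
  calc (∫⁻ s, ({q : EuclideanSpace ℝ (Fin 3) × EuclideanSpace ℝ (Fin 3) |
        ‖q.1‖ ^ 2 * ‖q.2‖ ^ 2 - (∑ k : Fin 3, q.1 k * q.2 k) ^ 2 ≤ α}.indicator
          (fun _ => (1 : ℝ≥0∞)) (s, t))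
        * (W ∩ Ann3 i).indicator (fun _ => (1 : ℝ≥0∞)) s)
      ≤ ∫⁻ s, G.indicator (fun _ => (1:ℝ≥0∞)) s := lintegral_mono hpt
    _ = volume G := lintegral_indicator_one hGm
    _ ≤ ENNReal.ofReal (8 * (2:ℝ)^i * (α / ‖t‖^2)) := tube_vol' t ht0 _ α hα
    _ ≤ ENNReal.ofReal (32 * α * (2:ℝ)^(i - 2*j)) := by
        apply ENNReal.ofReal_le_ofReal
        have h1 : ((2:ℝ)^(j-1))^2 ≤ ‖t‖^2 := by
          apply pow_le_pow_left₀ (by positivity) htl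
        have h2 : α / ‖t‖^2 ≤ α / ((2:ℝ)^(j-1))^2 :=
          div_le_div_of_nonneg_left hα (by positivity) h1
        have h3 : ((2:ℝ)^(j-1))^2 = (2:ℝ)^(2*j-2) := by
          rw [← zpow_natCast ((2:ℝ)^(j-1)) 2, ← zpow_mul]
          norm_num
          ring_nf
        have h4 : α / ((2:ℝ)^(j-1))^2 = α * (2:ℝ)^(2-2*j) := by
          rw [h3, div_eq_mul_inv, ← zpow_neg]
          ring_nf
        have h5 : 8 * (2:ℝ)^i * (α / ‖t‖^2) ≤ 8 * (2:ℝ)^i * (α * (2:ℝ)^(2-2*j)) := by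
          apply mul_le_mul_of_nonneg_left (by rw [← h4]; exact h2) (by positivity)
        refine le_trans h5 (le_of_eq ?_)
        rw [show (32:ℝ) * α * (2:ℝ)^(i-2*j) = 8 * α * ((2:ℝ)^(i-2*j) * 4) by ring,
          show ((2:ℝ)^(i-2*j) * 4) = (2:ℝ)^(i+(2-2*j)) by
            rw [show i+(2-2*j) = (i-2*j)+2 by ring, zpow_add₀ (two_ne_zero)]; norm_num]
        rw [zpow_add₀ (two_ne_zero' ℝ) i (2-2*j)]
        ring
    _ = ENNReal.ofReal (32 * α) * (2:ℝ≥0∞) ^ (i - 2*j) := by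
        rw [ENNReal.ofReal_mul (by positivity), ofReal_two_zpow]

lemma indicator_ne_top (S : Set (EuclideanSpace ℝ (Fin 3))) (x : EuclideanSpace ℝ (Fin 3)) :
    S.indicator (fun _ => (1:ℝ≥0∞)) x ≠ ∞ := by
  by_cases h : x ∈ S <;> simp [h]

lemma outer_bound {X : Set (EuclideanSpace ℝ (Fin 3))} (hX : MeasurableSet X) (B : ℝ≥0∞)
    (g : EuclideanSpace ℝ (Fin 3) → ℝ≥0∞) (hg : ∀ x ∈ X, g x ≤ B) :
    ∫⁻ x, X.indicator (fun _ => (1:ℝ≥0∞)) x * g x ≤ B * volume X := by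
  calc ∫⁻ x, X.indicator (fun _ => (1:ℝ≥0∞)) x * g x
      ≤ ∫⁻ x, X.indicator (fun _ => B) x := by
        apply lintegral_mono
        intro x
        by_cases h : x ∈ X
        · simp only [Set.indicator_of_mem h, one_mul]; exact hg x h
        · simp only [Set.indicator_of_notMem h, zero_mul]; exact le_rfl
    _ = B * volume X := lintegral_indicator_const hX B


/-- annulus-localized Gram-determinant sublevel set bound in `ℝ³`. -/
theorem statement16 :
    ∃ C : ℝ, 0 ≤ C ∧ ∀ α : ℝ, 0 < α → ∀ i j : ℤ,
      ∀ E F : Set (EuclideanSpace ℝ (Fin 3)), MeasurableSet E → MeasurableSet F →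
      (∫⁻ s, ∫⁻ t,
          ({q : EuclideanSpace ℝ (Fin 3) × EuclideanSpace ℝ (Fin 3) |
              ‖q.1‖ ^ 2 * ‖q.2‖ ^ 2 - (∑ k : Fin 3, q.1 k * q.2 k) ^ 2 ≤ α}.indicator
                (fun _ => (1 : ℝ≥0∞)) (s, t))
            * (E ∩ Ann3 i).indicator (fun _ => (1 : ℝ≥0∞)) s
            * (F ∩ Ann3 j).indicator (fun _ => (1 : ℝ≥0∞)) t)
        ≤ ENNReal.ofReal (C * α) *
            min ((2 : ℝ≥0∞) ^ (i - 2 * j) * volume (F ∩ Ann3 j))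
                ((2 : ℝ≥0∞) ^ (-2 * i + j) * volume (E ∩ Ann3 i)) := by
  refine ⟨32, by norm_num, ?_⟩
  intro α hα i j E F hE hF
  set K : Set (EuclideanSpace ℝ (Fin 3) × EuclideanSpace ℝ (Fin 3)) :=
    {q | ‖q.1‖ ^ 2 * ‖q.2‖ ^ 2 - (∑ k : Fin 3, q.1 k * q.2 k) ^ 2 ≤ α} with hK_def
  have hAnn : ∀ m : ℤ, MeasurableSet (Ann3 m) := by
    intro m
    rw [show Ann3 m = {x : EuclideanSpace ℝ (Fin 3) | (2:ℝ)^(m-1) ≤ ‖x‖}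
        ∩ {x | ‖x‖ < (2:ℝ)^m} from rfl]
    exact (measurableSet_le measurable_const measurable_norm).inter
      (measurableSet_lt measurable_norm measurable_const)
  have hE' : MeasurableSet (E ∩ Ann3 i) := hE.inter (hAnn i)
  have hF' : MeasurableSet (F ∩ Ann3 j) := hF.inter (hAnn j)
  have hcont : Continuous fun q : EuclideanSpace ℝ (Fin 3) × EuclideanSpace ℝ (Fin 3) =>
      ‖q.1‖^2 * ‖q.2‖^2 - (∑ k : Fin 3, q.1 k * q.2 k)^2 :=
    (((continuous_fst.norm.pow 2).mul (continuous_snd.norm.pow 2)).sub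
      ((continuous_finset_sum _ fun k _ =>
        (((EuclideanSpace.proj (𝕜 := ℝ) k).continuous.comp continuous_fst).mul
          ((EuclideanSpace.proj (𝕜 := ℝ) k).continuous.comp continuous_snd))).pow 2))
  have hKm : MeasurableSet K := (isClosed_le hcont continuous_const).measurableSet
  have hKsym : ∀ a b : EuclideanSpace ℝ (Fin 3),
      K.indicator (fun _ => (1:ℝ≥0∞)) (a, b) = K.indicator (fun _ => (1:ℝ≥0∞)) (b, a) := by
    intro a b
    have hmem : (a, b) ∈ K ↔ (b, a) ∈ K := by
      rw [hK_def]
      simp only [mem_setOf_eq]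
      rw [show ‖a‖^2 * ‖b‖^2 = ‖b‖^2 * ‖a‖^2 from mul_comm _ _,
        show (∑ k : Fin 3, a k * b k) = ∑ k : Fin 3, b k * a k from
          Finset.sum_congr rfl fun k _ => mul_comm _ _]
    by_cases h : (a, b) ∈ K
    · rw [Set.indicator_of_mem h, Set.indicator_of_mem (hmem.mp h)]
    · rw [Set.indicator_of_notMem h, Set.indicator_of_notMem (fun hc => h (hmem.mpr hc))]
  have hmeas : Measurable (fun z : EuclideanSpace ℝ (Fin 3) × EuclideanSpace ℝ (Fin 3) =>
      K.indicator (fun _ => (1:ℝ≥0∞)) z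
        * (E ∩ Ann3 i).indicator (fun _ => (1:ℝ≥0∞)) z.1
        * (F ∩ Ann3 j).indicator (fun _ => (1:ℝ≥0∞)) z.2) :=
    ((measurable_const.indicator hKm).mul
      ((measurable_const.indicator hE').comp measurable_fst)).mul
      ((measurable_const.indicator hF').comp measurable_snd)
  have branch1 :
      (∫⁻ s, ∫⁻ t, K.indicator (fun _ => (1:ℝ≥0∞)) (s, t)
          * (E ∩ Ann3 i).indicator (fun _ => (1:ℝ≥0∞)) s
          * (F ∩ Ann3 j).indicator (fun _ => (1:ℝ≥0∞)) t)
        ≤ (ENNReal.ofReal (32 * α) * (2:ℝ≥0∞)^(i - 2*j)) * volume (F ∩ Ann3 j) := by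
    rw [lintegral_lintegral_swap hmeas.aemeasurable]
    have step : (∫⁻ t, ∫⁻ s, K.indicator (fun _ => (1:ℝ≥0∞)) (s, t)
          * (E ∩ Ann3 i).indicator (fun _ => (1:ℝ≥0∞)) s
          * (F ∩ Ann3 j).indicator (fun _ => (1:ℝ≥0∞)) t)
        = ∫⁻ t, (F ∩ Ann3 j).indicator (fun _ => (1:ℝ≥0∞)) t
            * ∫⁻ s, K.indicator (fun _ => (1:ℝ≥0∞)) (s, t)
              * (E ∩ Ann3 i).indicator (fun _ => (1:ℝ≥0∞)) s := by
      refine lintegral_congr fun t => ?_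
      rw [← lintegral_const_mul' _ _ (indicator_ne_top _ t)]
      exact lintegral_congr fun s => by ring
    rw [step]
    exact outer_bound hF' _ _ (fun t ht => section_bound α hα.le i j E t ht.2.1)
  have branch2 :
      (∫⁻ s, ∫⁻ t, K.indicator (fun _ => (1:ℝ≥0∞)) (s, t)
          * (E ∩ Ann3 i).indicator (fun _ => (1:ℝ≥0∞)) s
          * (F ∩ Ann3 j).indicator (fun _ => (1:ℝ≥0∞)) t)
        ≤ (ENNReal.ofReal (32 * α) * (2:ℝ≥0∞)^(j - 2*i)) * volume (E ∩ Ann3 i) := by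
    have step : (∫⁻ s, ∫⁻ t, K.indicator (fun _ => (1:ℝ≥0∞)) (s, t)
          * (E ∩ Ann3 i).indicator (fun _ => (1:ℝ≥0∞)) s
          * (F ∩ Ann3 j).indicator (fun _ => (1:ℝ≥0∞)) t)
        = ∫⁻ s, (E ∩ Ann3 i).indicator (fun _ => (1:ℝ≥0∞)) s
            * ∫⁻ t, K.indicator (fun _ => (1:ℝ≥0∞)) (t, s)
              * (F ∩ Ann3 j).indicator (fun _ => (1:ℝ≥0∞)) t := by
      refine lintegral_congr fun s => ?_
      rw [← lintegral_const_mul' _ _ (indicator_ne_top _ s)]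
      refine lintegral_congr fun t => ?_
      rw [hKsym t s]
      ring
    rw [step]
    exact outer_bound hE' _ _ (fun s hs => section_bound α hα.le j i F s hs.2.1)
  have hmin : ENNReal.ofReal (32 * α) *
        min ((2 : ℝ≥0∞) ^ (i - 2 * j) * volume (F ∩ Ann3 j))
            ((2 : ℝ≥0∞) ^ (-2 * i + j) * volume (E ∩ Ann3 i))
      = min (ENNReal.ofReal (32 * α) * ((2 : ℝ≥0∞) ^ (i - 2 * j) * volume (F ∩ Ann3 j)))
            (ENNReal.ofReal (32 * α) * ((2 : ℝ≥0∞) ^ (-2 * i + j) * volume (E ∩ Ann3 i))) := by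
    rcases le_total ((2 : ℝ≥0∞) ^ (i - 2 * j) * volume (F ∩ Ann3 j))
        ((2 : ℝ≥0∞) ^ (-2 * i + j) * volume (E ∩ Ann3 i)) with h | h
    · rw [min_eq_left h, min_eq_left (mul_le_mul_right h _)]
    · rw [min_eq_right h, min_eq_right (mul_le_mul_right h _)]
  rw [hmin]
  refine le_min ?_ ?_
  · exact le_trans branch1 (le_of_eq (mul_assoc _ _ _))
  · refine le_trans branch2 (le_of_eq ?_)
    rw [show j - 2*i = -2*i + j by ring, mul_assoc]
end
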